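/- arXiv:2104.05787 — 12 statements merged into one kernel-verified Lean document; each statement's English description precedes it below -/
import Mathlib

section
/- Let P and Q be probability measures on a measurable space (Ω, 𝓕) with P absolutely continuous with respect to Q, let 𝓖 be a sub-σ-algebra of 𝓕, and let X : Ω → ℝ be integrable with respect to P. Then the Bayes formula holds: P-almost everywhere, the conditional expectation E_P[X | 𝓖] equals E_Q[X · (dP/dQ) | 𝓖] / E_Q[(dP/dQ) | 𝓖], where dP/dQ denotes the Radon–Nikodym derivative of P with respect to Q; in particular E_Q[(dP/dQ) | 𝓖] > 0 holds P-almost everywhere, so the quotient is well defined P-a.e. -/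
/-!
Write `Z = dP/dQ`. Since `∫_s Z dQ = P s`, the `𝓖`-measurable set where `E_Q[Z | 𝓖] ≤ 0` has
`P`-measure `0`. For `X` integrable under `P`, the product `E_P[X | 𝓖] · E_Q[Z | 𝓖]` has, by the
pull-out property, the same integrals over `𝓖`-sets as `E_P[X | 𝓖] · Z` under `Q`, i.e. as
`E_P[X | 𝓖]`, hence as `X`, under `P`; so it is a version of `E_Q[X · Z | 𝓖]`, `Q`-a.e. and hence
`P`-a.e.
-/

open MeasureTheory

namespace MeasureTheory

variable {Ω : Type*} {m m₀ : MeasurableSpace Ω} {μ ν : Measure Ω}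

lemma ae_pos_condExp_toReal_rnDeriv (hm : m ≤ m₀) [IsFiniteMeasure μ]
    [μ.HaveLebesgueDecomposition ν] [SigmaFinite (ν.trim hm)] (hμν : μ ≪ ν) :
    ∀ᵐ ω ∂μ, 0 < ν[fun ω' ↦ (μ.rnDeriv ν ω').toReal | m] ω := by
  set s := {ω | ν[fun ω' ↦ (μ.rnDeriv ν ω').toReal | m] ω ≤ 0}
  have hs : MeasurableSet[m] s :=
    measurableSet_le stronglyMeasurable_condExp.measurable measurable_const
  have hμs : μ.real s ≤ 0 :=
    calc μ.real s = ∫ ω in s, (μ.rnDeriv ν ω).toReal ∂ν :=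
          (Measure.setIntegral_toReal_rnDeriv' hμν (hm s hs)).symm
      _ = ∫ ω in s, ν[fun ω' ↦ (μ.rnDeriv ν ω').toReal | m] ω ∂ν :=
          (setIntegral_condExp hm Measure.integrable_toReal_rnDeriv hs).symm
      _ ≤ 0 := setIntegral_nonpos (hm s hs) fun _ hω ↦ hω
  have : μ s = 0 := (measureReal_eq_zero_iff).1 (hμs.antisymm measureReal_nonneg)
  simpa only [ae_iff, not_lt] using this

lemma condExp_mul_toReal_rnDeriv (hm : m ≤ m₀) [IsFiniteMeasure μ]
    [μ.HaveLebesgueDecomposition ν] [SigmaFinite (μ.trim hm)] [SigmaFinite (ν.trim hm)]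
    (hμν : μ ≪ ν) {f : Ω → ℝ} (hf : Integrable f μ) :
    ν[fun ω ↦ f ω * (μ.rnDeriv ν ω).toReal | m] =ᵐ[ν]
      μ[f | m] * ν[fun ω ↦ (μ.rnDeriv ν ω).toReal | m] := by
  set Z : Ω → ℝ := fun ω ↦ (μ.rnDeriv ν ω).toReal
  have integrable_mul_Z {g : Ω → ℝ} (hg : Integrable g μ) : Integrable (g * Z) ν :=
    ((integrable_toReal_rnDeriv_mul_iff hμν).2 hg).congr (ae_of_all _ fun _ ↦ mul_comm _ _)
  have setIntegral_mul_Z (g : Ω → ℝ) {s : Set Ω} (hs : MeasurableSet s) :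
      ∫ ω in s, g ω * Z ω ∂ν = ∫ ω in s, g ω ∂μ :=
    (integral_congr_ae (ae_of_all _ fun _ ↦ mul_comm _ _)).trans
      (setIntegral_toReal_rnDeriv_mul hμν hs)
  have pull_out : ν[μ[f | m] * Z | m] =ᵐ[ν] μ[f | m] * ν[Z | m] :=
    condExp_mul_of_stronglyMeasurable_left stronglyMeasurable_condExp
      (integrable_mul_Z integrable_condExp) Measure.integrable_toReal_rnDeriv
  refine (ae_eq_condExp_of_forall_setIntegral_eq hm (integrable_mul_Z hf)
    (fun _ _ _ ↦ (integrable_condExp.congr pull_out).integrableOn) (fun s hs _ ↦ ?_)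
    (stronglyMeasurable_condExp.mul stronglyMeasurable_condExp).aestronglyMeasurable).symm
  calc ∫ ω in s, (μ[f | m] * ν[Z | m]) ω ∂ν = ∫ ω in s, ν[μ[f | m] * Z | m] ω ∂ν :=
        setIntegral_congr_ae (hm s hs) (pull_out.mono fun _ h _ ↦ h.symm)
    _ = ∫ ω in s, μ[f | m] ω * Z ω ∂ν :=
        setIntegral_condExp hm (integrable_mul_Z integrable_condExp) hs
    _ = ∫ ω in s, μ[f | m] ω ∂μ := setIntegral_mul_Z _ (hm s hs)
    _ = ∫ ω in s, f ω ∂μ := setIntegral_condExp hm hf hs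
    _ = ∫ ω in s, f ω * Z ω ∂ν := (setIntegral_mul_Z f (hm s hs)).symm

end MeasureTheory

/-- **Bayes formula for conditional expectations.** If `P ≪ Q` are probability measures on
`(Ω, 𝓕)`, `𝓖 ≤ 𝓕` is a sub-σ-algebra, and `X` is `P`-integrable, then `P`-a.e.
`E_Q[dP/dQ | 𝓖] > 0` and `E_P[X | 𝓖] = E_Q[X · dP/dQ | 𝓖] / E_Q[dP/dQ | 𝓖]`. -/
theorem bayes_formula_conditional_expectation
    {Ω : Type*} {F : MeasurableSpace Ω} (P Q : Measure Ω)
    [IsProbabilityMeasure P] [IsProbabilityMeasure Q]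
    (hPQ : P ≪ Q) (G : MeasurableSpace Ω) (hG : G ≤ F)
    (X : Ω → ℝ) (hX : Integrable X P) :
    (∀ᵐ ω ∂P, 0 < (Q[fun ω' => (P.rnDeriv Q ω').toReal | G]) ω) ∧
    (∀ᵐ ω ∂P, (P[X | G]) ω =
      (Q[fun ω' => X ω' * (P.rnDeriv Q ω').toReal | G]) ω /
      (Q[fun ω' => (P.rnDeriv Q ω').toReal | G]) ω) := by
  have := isFiniteMeasure_trim (μ := P) hG
  have := isFiniteMeasure_trim (μ := Q) hG
  have hpos := ae_pos_condExp_toReal_rnDeriv hG hPQ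
  refine ⟨hpos, ?_⟩
  filter_upwards [hpos, hPQ.ae_eq (condExp_mul_toReal_rnDeriv hG hPQ hX)] with ω hω hmul
  rw [eq_div_iff hω.ne', hmul, Pi.mul_apply]
end

section
/- Under the absolute-continuity hypothesis, for every measurable cost c : Ω₀ × U₁ × U₂ → [0,∞] and every measurable γ₂ : Y₂ → U₂, the change-of-measure (static reduction) identity holds: ∫_Ω c(ω₀(ω), γ₁(y₁(ω)), γ₂(y₂(ω))) dP(ω) = ∫_{Ω₀×Y₁} ( ∫_{Y₂} c(ω₀, γ₁(y), γ₂(z)) · f(z, ω₀, γ₁(y), y) dQ(z) ) dν(ω₀, y), and this iterated integral equals the integral of (ω₀, y, z) ↦ c(ω₀, γ₁(y), γ₂(z)) · f(z, ω₀, γ₁(y), y) with respect to the product measure ν × Q. -/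
open MeasureTheory ProbabilityTheory
open scoped ENNReal NNReal

lemma lintegral_compProd_of_forall_eq_withDensity
    {α β : Type*} [MeasurableSpace α] [MeasurableSpace β]
    {μ : Measure α} [SFinite μ] {κ : Kernel α β} [IsSFiniteKernel κ] {Q : Measure β}
    {g : α × β → ℝ≥0∞} (hg : Measurable g)
    (hκ : ∀ a, κ a = Q.withDensity fun b => g (a, b))
    {h : α × β → ℝ≥0∞} (hh : Measurable h) :
    ∫⁻ x, h x ∂(μ ⊗ₘ κ) = ∫⁻ a, ∫⁻ b, h (a, b) * g (a, b) ∂Q ∂μ := by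
  rw [Measure.lintegral_compProd hh]
  refine lintegral_congr fun a => ?_
  rw [hκ a, lintegral_withDensity_eq_lintegral_mul _ (by fun_prop) (by fun_prop)]
  simp only [Pi.mul_apply, mul_comm]

theorem policy_independent_static_reduction_change_of_measure_general
    {Ω Ω₀ Y₁ Y₂ U₁ U₂ : Type*}
    [MeasurableSpace Ω] [MeasurableSpace Ω₀] [MeasurableSpace Y₁]
    [MeasurableSpace Y₂] [MeasurableSpace U₁] [MeasurableSpace U₂]
    (P : Measure Ω)
    (ω₀ : Ω → Ω₀) (y₁ : Ω → Y₁) (y₂ : Ω → Y₂)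
    (hω₀ : Measurable ω₀) (hy₁ : Measurable y₁) (hy₂ : Measurable y₂)
    (γ₁ : Y₁ → U₁) (hγ₁ : Measurable γ₁)
    (Q : Measure Y₂) [IsProbabilityMeasure Q]
    (f : Y₂ × Ω₀ × U₁ × Y₁ → ℝ≥0) (hf : Measurable f)
    (ν : Measure (Ω₀ × Y₁)) [SFinite ν]
    (κ : Kernel (Ω₀ × Y₁) Y₂) [IsSFiniteKernel κ]
    (hκ : ∀ p : Ω₀ × Y₁,
      κ p = Q.withDensity fun z => (f (z, p.1, γ₁ p.2, p.2) : ℝ≥0∞))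
    (habs : P.map (fun ω => ((ω₀ ω, y₁ ω), y₂ ω)) = ν ⊗ₘ κ)
    (c : Ω₀ × U₁ × U₂ → ℝ≥0∞) (hc : Measurable c)
    (γ₂ : Y₂ → U₂) (hγ₂ : Measurable γ₂) :
    (∫⁻ ω, c (ω₀ ω, γ₁ (y₁ ω), γ₂ (y₂ ω)) ∂P
      = ∫⁻ p, ∫⁻ z, c (p.1, γ₁ p.2, γ₂ z)
          * (f (z, p.1, γ₁ p.2, p.2) : ℝ≥0∞) ∂Q ∂ν)
    ∧ (∫⁻ p, ∫⁻ z, c (p.1, γ₁ p.2, γ₂ z)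
          * (f (z, p.1, γ₁ p.2, p.2) : ℝ≥0∞) ∂Q ∂ν
      = ∫⁻ q, c (q.1.1, γ₁ q.1.2, γ₂ q.2)
          * (f (q.2, q.1.1, γ₁ q.1.2, q.1.2) : ℝ≥0∞) ∂(ν.prod Q)) := by
  let cost : (Ω₀ × Y₁) × Y₂ → ℝ≥0∞ := fun q => c (q.1.1, γ₁ q.1.2, γ₂ q.2)
  let density : (Ω₀ × Y₁) × Y₂ → ℝ≥0∞ := fun q => f (q.2, q.1.1, γ₁ q.1.2, q.1.2)
  have hcost : Measurable cost := by fun_prop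
  have hdensity : Measurable density := by fun_prop
  constructor
  · calc ∫⁻ ω, c (ω₀ ω, γ₁ (y₁ ω), γ₂ (y₂ ω)) ∂P
        = ∫⁻ q, cost q ∂(P.map fun ω => ((ω₀ ω, y₁ ω), y₂ ω)) :=
          (lintegral_map hcost ((hω₀.prodMk hy₁).prodMk hy₂)).symm
      _ = _ := by rw [habs, lintegral_compProd_of_forall_eq_withDensity hdensity hκ hcost]
  · exact (lintegral_prod _ (hcost.mul hdensity).aemeasurable).symm

/-- **Policy-independent static reduction (change of measure) identity.**
Under Witsenhausen's absolute-continuity hypothesis — the law of `(ω₀, y₁, y₂)` is the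
composition of `ν` (the law of `(ω₀, y₁)`) with the kernel
`κ (ω₀, y) = Q.withDensity (z ↦ f (z, ω₀, γ₁ y, y))` — the expected cost under `P` equals the
iterated integral against `ν` and `Q` of the cost multiplied by the density `f`, and this
iterated integral equals the integral against the product measure `ν × Q`. -/
theorem policy_independent_static_reduction_change_of_measure
    {Ω Ω₀ Y₁ Y₂ U₁ U₂ : Type*}
    [MeasurableSpace Ω] [MeasurableSpace Ω₀] [MeasurableSpace Y₁]
    [MeasurableSpace Y₂] [MeasurableSpace U₁] [MeasurableSpace U₂]
    (P : Measure Ω) [IsProbabilityMeasure P]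
    (ω₀ : Ω → Ω₀) (y₁ : Ω → Y₁) (y₂ : Ω → Y₂)
    (hω₀ : Measurable ω₀) (hy₁ : Measurable y₁) (hy₂ : Measurable y₂)
    (γ₁ : Y₁ → U₁) (hγ₁ : Measurable γ₁)
    (Q : Measure Y₂) [IsProbabilityMeasure Q]
    (f : Y₂ × Ω₀ × U₁ × Y₁ → ℝ≥0) (hf : Measurable f)
    (ν : Measure (Ω₀ × Y₁)) [SFinite ν]
    (hν : ν = P.map fun ω => (ω₀ ω, y₁ ω))
    (κ : Kernel (Ω₀ × Y₁) Y₂) [IsSFiniteKernel κ]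
    (hκ : ∀ p : Ω₀ × Y₁,
      κ p = Q.withDensity fun z => (f (z, p.1, γ₁ p.2, p.2) : ℝ≥0∞))
    (habs : P.map (fun ω => ((ω₀ ω, y₁ ω), y₂ ω)) = ν ⊗ₘ κ)
    (c : Ω₀ × U₁ × U₂ → ℝ≥0∞) (hc : Measurable c)
    (γ₂ : Y₂ → U₂) (hγ₂ : Measurable γ₂) :
    (∫⁻ ω, c (ω₀ ω, γ₁ (y₁ ω), γ₂ (y₂ ω)) ∂P
      = ∫⁻ p, ∫⁻ z, c (p.1, γ₁ p.2, γ₂ z)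
          * (f (z, p.1, γ₁ p.2, p.2) : ℝ≥0∞) ∂Q ∂ν)
    ∧ (∫⁻ p, ∫⁻ z, c (p.1, γ₁ p.2, γ₂ z)
          * (f (z, p.1, γ₁ p.2, p.2) : ℝ≥0∞) ∂Q ∂ν
      = ∫⁻ q, c (q.1.1, γ₁ q.1.2, γ₂ q.2)
          * (f (q.2, q.1.1, γ₁ q.1.2, q.1.2) : ℝ≥0∞) ∂(ν.prod Q)) :=
  policy_independent_static_reduction_change_of_measure_general P ω₀ y₁ y₂ hω₀ hy₁ hy₂ γ₁ hγ₁ Q f hf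
    ν κ hκ habs c hc γ₂ hγ₂
end

section
/- (Theorem 3.1(i), two decision makers.) Define the dynamic expected cost J(γ₁, γ₂) = ∫_Ω c(ω₀(ω), γ₁(y₁(ω)), γ₂(y₂^{γ₁}(ω))) dP(ω) over measurable policies γ₁ : Y₁ → U₁, γ₂ : Y₂ → U₂, and the policy-independent static-reduction cost J̃(γ₁, γ₂) = ∫_{(Ω₀×Y₁)×Y₂} c(ω₀, γ₁(y), γ₂(z)) · f(z, ω₀, γ₁(y), y) d(ν × Q). Then a policy pair (γ₁*, γ₂*) is person-by-person optimal for J (i.e., J(γ₁*, γ₂*) ≤ J(γ₁, γ₂*) for every measurable γ₁ and J(γ₁*, γ₂*) ≤ J(γ₁*, γ₂) for every measurable γ₂) if and only if it is person-by-person optimal for J̃; likewise, (γ₁*, γ₂*) is globally optimal for J (i.e., J(γ₁*, γ₂*) ≤ J(γ₁, γ₂) for all measurable policy pairs) if and only if it is globally optimal for J̃. -/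
open MeasureTheory ProbabilityTheory
open scoped ENNReal NNReal

/-! By the absolute-continuity hypothesis and a change of variables, `J γ₁ γ₂ = Jt γ₁ γ₂` for
every measurable policy pair: the static reduction only moves the dependence of the second
observation on `γ₁` from the measure into the integrand. The two costs therefore agree on all
admissible policies, so they have the same person-by-person and global optima. -/

section ChangeOfMeasure

variable {Ω α β : Type*} [MeasurableSpace Ω] [MeasurableSpace α] [MeasurableSpace β]

theorem MeasureTheory.Measure.compProd_withDensity_const (μ : Measure α) [SFinite μ]
    (Q : Measure β) [SFinite Q] {d : α → β → ℝ≥0} (hd : Measurable (Function.uncurry d)) :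
    μ ⊗ₘ Kernel.withDensity (Kernel.const α Q) (fun a b => (d a b : ℝ≥0∞))
      = (μ.prod Q).withDensity fun q => (d q.1 q.2 : ℝ≥0∞) := by
  rw [Measure.compProd_withDensity (by fun_prop), Measure.compProd_const]

theorem lintegral_comp_eq_lintegral_prod_mul_of_map_eq {P : Measure Ω} {T : Ω → α × β}
    (hT : Measurable T) {μ : Measure α} [SFinite μ] {Q : Measure β} [SFinite Q]
    {d : α → β → ℝ≥0} (hd : Measurable (Function.uncurry d))
    (hmap : P.map T = μ ⊗ₘ Kernel.withDensity (Kernel.const α Q) (fun a b => (d a b : ℝ≥0∞)))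
    {g : α × β → ℝ≥0∞} (hg : Measurable g) :
    ∫⁻ ω, g (T ω) ∂P = ∫⁻ q, g q * d q.1 q.2 ∂(μ.prod Q) := by
  rw [← lintegral_map hg hT, hmap, Measure.compProd_withDensity_const μ Q hd,
    lintegral_withDensity_eq_lintegral_mul _ (by fun_prop) hg]
  simp only [Pi.mul_apply, mul_comm]

end ChangeOfMeasure

theorem pbp_and_global_optimality_policy_independent_static_reduction_general
    {Ω Ω₀ Y₁ Y₂ U₁ U₂ : Type*}
    [MeasurableSpace Ω] [MeasurableSpace Ω₀] [MeasurableSpace Y₁]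
    [MeasurableSpace Y₂] [MeasurableSpace U₁] [MeasurableSpace U₂]
    (P : Measure Ω)
    (ω₀ : Ω → Ω₀) (y₁ : Ω → Y₁) (h : Ω × U₁ → Y₂)
    (hω₀ : Measurable ω₀) (hy₁ : Measurable y₁) (hh : Measurable h)
    (Q : Measure Y₂) [IsProbabilityMeasure Q]
    (f : Y₂ × Ω₀ × U₁ × Y₁ → ℝ≥0) (hf : Measurable f)
    (ν : Measure (Ω₀ × Y₁)) [SFinite ν]
    (habs : ∀ γ₁ : Y₁ → U₁, Measurable γ₁ →
      P.map (fun ω => ((ω₀ ω, y₁ ω), h (ω, γ₁ (y₁ ω))))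
        = ν ⊗ₘ Kernel.withDensity (Kernel.const (Ω₀ × Y₁) Q)
            (fun p z => (f (z, p.1, γ₁ p.2, p.2) : ℝ≥0∞)))
    (c : Ω₀ × U₁ × U₂ → ℝ≥0∞) (hc : Measurable c)
    (J Jt : (Y₁ → U₁) → (Y₂ → U₂) → ℝ≥0∞)
    (hJ : ∀ γ₁ γ₂, J γ₁ γ₂
      = ∫⁻ ω, c (ω₀ ω, γ₁ (y₁ ω), γ₂ (h (ω, γ₁ (y₁ ω)))) ∂P)
    (hJt : ∀ γ₁ γ₂, Jt γ₁ γ₂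
      = ∫⁻ q, c (q.1.1, γ₁ q.1.2, γ₂ q.2)
          * (f (q.2, q.1.1, γ₁ q.1.2, q.1.2) : ℝ≥0∞) ∂(ν.prod Q))
    (γ₁s : Y₁ → U₁) (γ₂s : Y₂ → U₂)
    (hγ₁s : Measurable γ₁s) (hγ₂s : Measurable γ₂s) :
    (((∀ γ₁ : Y₁ → U₁, Measurable γ₁ → J γ₁s γ₂s ≤ J γ₁ γ₂s)
        ∧ (∀ γ₂ : Y₂ → U₂, Measurable γ₂ → J γ₁s γ₂s ≤ J γ₁s γ₂))
      ↔ ((∀ γ₁ : Y₁ → U₁, Measurable γ₁ → Jt γ₁s γ₂s ≤ Jt γ₁ γ₂s)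
        ∧ (∀ γ₂ : Y₂ → U₂, Measurable γ₂ → Jt γ₁s γ₂s ≤ Jt γ₁s γ₂)))
    ∧ ((∀ (γ₁ : Y₁ → U₁) (γ₂ : Y₂ → U₂), Measurable γ₁ → Measurable γ₂ →
          J γ₁s γ₂s ≤ J γ₁ γ₂)
      ↔ (∀ (γ₁ : Y₁ → U₁) (γ₂ : Y₂ → U₂), Measurable γ₁ → Measurable γ₂ →
          Jt γ₁s γ₂s ≤ Jt γ₁ γ₂)) := by
  have hJ_eq_Jt : ∀ γ₁ γ₂, Measurable γ₁ → Measurable γ₂ → J γ₁ γ₂ = Jt γ₁ γ₂ := by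
    intro γ₁ γ₂ hγ₁ hγ₂
    rw [hJ, hJt]
    exact lintegral_comp_eq_lintegral_prod_mul_of_map_eq (by fun_prop) (by fun_prop)
      (habs γ₁ hγ₁) (g := fun q => c (q.1.1, γ₁ q.1.2, γ₂ q.2)) (by fun_prop)
  have hs := hJ_eq_Jt γ₁s γ₂s hγ₁s hγ₂s
  exact ⟨and_congr
      (forall₂_congr fun γ₁ hγ₁ => by rw [hs, hJ_eq_Jt γ₁ γ₂s hγ₁ hγ₂s])
      (forall₂_congr fun γ₂ hγ₂ => by rw [hs, hJ_eq_Jt γ₁s γ₂ hγ₁s hγ₂]),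
    forall₂_congr fun γ₁ γ₂ => forall₂_congr fun hγ₁ hγ₂ => by
      rw [hs, hJ_eq_Jt γ₁ γ₂ hγ₁ hγ₂]⟩

/-- **Theorem 3.1(i) (two decision makers): bijection of person-by-person optimal and
globally optimal policies under the policy-independent static reduction.**
`J` is the dynamic expected cost and `J̃` (here `Jt`) is the cost of the policy-independent
static reduction. Under the absolute-continuity hypothesis, a policy pair is
person-by-person optimal for `J` iff it is person-by-person optimal for `Jt`, and it is
globally optimal for `J` iff it is globally optimal for `Jt`. -/
theorem pbp_and_global_optimality_policy_independent_static_reduction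
    {Ω Ω₀ Y₁ Y₂ U₁ U₂ : Type*}
    [MeasurableSpace Ω] [MeasurableSpace Ω₀] [MeasurableSpace Y₁]
    [MeasurableSpace Y₂] [MeasurableSpace U₁] [MeasurableSpace U₂]
    (P : Measure Ω) [IsProbabilityMeasure P]
    (ω₀ : Ω → Ω₀) (y₁ : Ω → Y₁) (h : Ω × U₁ → Y₂)
    (hω₀ : Measurable ω₀) (hy₁ : Measurable y₁) (hh : Measurable h)
    (Q : Measure Y₂) [IsProbabilityMeasure Q]
    (f : Y₂ × Ω₀ × U₁ × Y₁ → ℝ≥0) (hf : Measurable f)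
    (ν : Measure (Ω₀ × Y₁)) [SFinite ν]
    (hν : ν = P.map fun ω => (ω₀ ω, y₁ ω))
    (habs : ∀ γ₁ : Y₁ → U₁, Measurable γ₁ →
      P.map (fun ω => ((ω₀ ω, y₁ ω), h (ω, γ₁ (y₁ ω))))
        = ν ⊗ₘ Kernel.withDensity (Kernel.const (Ω₀ × Y₁) Q)
            (fun p z => (f (z, p.1, γ₁ p.2, p.2) : ℝ≥0∞)))
    (c : Ω₀ × U₁ × U₂ → ℝ≥0∞) (hc : Measurable c)
    (J Jt : (Y₁ → U₁) → (Y₂ → U₂) → ℝ≥0∞)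
    (hJ : ∀ γ₁ γ₂, J γ₁ γ₂
      = ∫⁻ ω, c (ω₀ ω, γ₁ (y₁ ω), γ₂ (h (ω, γ₁ (y₁ ω)))) ∂P)
    (hJt : ∀ γ₁ γ₂, Jt γ₁ γ₂
      = ∫⁻ q, c (q.1.1, γ₁ q.1.2, γ₂ q.2)
          * (f (q.2, q.1.1, γ₁ q.1.2, q.1.2) : ℝ≥0∞) ∂(ν.prod Q))
    (γ₁s : Y₁ → U₁) (γ₂s : Y₂ → U₂)
    (hγ₁s : Measurable γ₁s) (hγ₂s : Measurable γ₂s) :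
    (((∀ γ₁ : Y₁ → U₁, Measurable γ₁ → J γ₁s γ₂s ≤ J γ₁ γ₂s)
        ∧ (∀ γ₂ : Y₂ → U₂, Measurable γ₂ → J γ₁s γ₂s ≤ J γ₁s γ₂))
      ↔ ((∀ γ₁ : Y₁ → U₁, Measurable γ₁ → Jt γ₁s γ₂s ≤ Jt γ₁ γ₂s)
        ∧ (∀ γ₂ : Y₂ → U₂, Measurable γ₂ → Jt γ₁s γ₂s ≤ Jt γ₁s γ₂)))
    ∧ ((∀ (γ₁ : Y₁ → U₁) (γ₂ : Y₂ → U₂), Measurable γ₁ → Measurable γ₂ →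
          J γ₁s γ₂s ≤ J γ₁ γ₂)
      ↔ (∀ (γ₁ : Y₁ → U₁) (γ₂ : Y₂ → U₂), Measurable γ₁ → Measurable γ₂ →
          Jt γ₁s γ₂s ≤ Jt γ₁ γ₂)) :=
  pbp_and_global_optimality_policy_independent_static_reduction_general P ω₀ y₁ h hω₀ hy₁ hh Q f hf
    ν habs c hc J Jt hJ hJt γ₁s γ₂s hγ₁s hγ₂s
end

section
/- (Theorem 4.2, two decision makers: global optimality is preserved under the policy-dependent static reduction.) A dynamic policy (γ₁*, γ₂*) is globally optimal for J^D (i.e., J^D(γ₁*, γ₂*) ≤ J^D(γ₁, γ₂) for all measurable γ₁ : Y₁ → U₁ and γ₂ : Y₁ × Ŷ' → U₂) if and only if the static policy (γ₁*, δ₂*) is globally optimal for J^S (i.e., J^S(γ₁*, δ₂*) ≤ J^S(γ₁, δ₂) for all measurable γ₁ and δ₂ : Y₁ × Ŷ → U₂), where δ₂*(y, s) := γ₂*(y, g(s, γ₁*(y))). In particular, the infimum of J^D over dynamic policies equals the infimum of J^S over static policies. -/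
/-!
Under the policy-dependent change of variables `δ₂(y, s) = γ₂(y, g(s, γ₁ y))` the dynamic cost
of `(γ₁, γ₂)` is literally the static cost of `(γ₁, δ₂)`. For a fixed measurable `γ₁` this change
of variables maps measurable DM2 policies onto measurable DM2 policies, since `g⁻` undoes it.
Hence both the optimality conditions and the infima agree, `γ₁`-slice by `γ₁`-slice.
-/

open MeasureTheory
open scoped ENNReal

section ReparamObs

variable {Y S T U V : Type*}

def reparamObs (h : S × U → T) (γ₁ : Y → U) (δ : Y × T → V) : Y × S → V :=
  fun p => δ (p.1, h (p.2, γ₁ p.1))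

theorem reparamObs_reparamObs {h : S × U → T} {h' : T × U → S}
    (hl : ∀ s u, h' (h (s, u), u) = s) (γ₁ : Y → U) (δ : Y × S → V) :
    reparamObs h γ₁ (reparamObs h' γ₁ δ) = δ :=
  funext fun p => by simp only [reparamObs, hl]

variable [MeasurableSpace Y] [MeasurableSpace S] [MeasurableSpace T] [MeasurableSpace U]
  [MeasurableSpace V]

theorem Measurable.reparamObs {h : S × U → T} {γ₁ : Y → U} {δ : Y × T → V}
    (hδ : Measurable δ) (hh : Measurable h) (hγ₁ : Measurable γ₁) :
    Measurable (reparamObs h γ₁ δ) :=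
  hδ.comp (measurable_fst.prodMk (hh.comp (measurable_snd.prodMk (hγ₁.comp measurable_fst))))

theorem image_reparamObs_setOf_measurable {h : S × U → T} {h' : T × U → S}
    (hh : Measurable h) (hh' : Measurable h') (hl : ∀ s u, h' (h (s, u), u) = s)
    {γ₁ : Y → U} (hγ₁ : Measurable γ₁) :
    reparamObs h γ₁ '' {δ : Y × T → V | Measurable δ} = {δ | Measurable δ} := by
  refine (Set.image_subset_iff.2 fun δ hδ => hδ.reparamObs hh hγ₁).antisymm fun δ hδ => ?_
  exact ⟨reparamObs h' γ₁ δ, hδ.reparamObs hh' hγ₁, reparamObs_reparamObs hl γ₁ δ⟩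

end ReparamObs

theorem global_optimality_policy_dependent_static_reduction_general
    {Ω Ω₀ Y₁ Yh Yh' U₁ U₂ : Type*}
    [MeasurableSpace Ω] [MeasurableSpace Y₁]
    [MeasurableSpace Yh] [MeasurableSpace Yh'] [MeasurableSpace U₁] [MeasurableSpace U₂]
    (P : Measure Ω)
    (ω₀ : Ω → Ω₀) (y₁ : Ω → Y₁) (yhat₂ : Ω → Yh)
    (g : Yh × U₁ → Yh') (ginv : Yh' × U₁ → Yh)
    (hg : Measurable g) (hginv : Measurable ginv)
    (hgl : ∀ (s : Yh) (u : U₁), ginv (g (s, u), u) = s)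
    (c : Ω₀ × U₁ × U₂ → ℝ≥0∞)
    (JD : (Y₁ → U₁) → (Y₁ × Yh' → U₂) → ℝ≥0∞)
    (JS : (Y₁ → U₁) → (Y₁ × Yh → U₂) → ℝ≥0∞)
    (hJD : ∀ γ₁ γ₂, JD γ₁ γ₂
      = ∫⁻ ω, c (ω₀ ω, γ₁ (y₁ ω), γ₂ (y₁ ω, g (yhat₂ ω, γ₁ (y₁ ω)))) ∂P)
    (hJS : ∀ γ₁ δ₂, JS γ₁ δ₂
      = ∫⁻ ω, c (ω₀ ω, γ₁ (y₁ ω), δ₂ (y₁ ω, yhat₂ ω)) ∂P)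
    (γ₁s : Y₁ → U₁) (γ₂s : Y₁ × Yh' → U₂) :
    ((∀ (γ₁ : Y₁ → U₁) (γ₂ : Y₁ × Yh' → U₂), Measurable γ₁ → Measurable γ₂ →
        JD γ₁s γ₂s ≤ JD γ₁ γ₂)
      ↔ (∀ (γ₁ : Y₁ → U₁) (δ₂ : Y₁ × Yh → U₂), Measurable γ₁ → Measurable δ₂ →
        JS γ₁s (fun p => γ₂s (p.1, g (p.2, γ₁s p.1))) ≤ JS γ₁ δ₂))
    ∧ (⨅ (γ₁ : Y₁ → U₁) (_ : Measurable γ₁) (γ₂ : Y₁ × Yh' → U₂) (_ : Measurable γ₂),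
        JD γ₁ γ₂)
      = ⨅ (γ₁ : Y₁ → U₁) (_ : Measurable γ₁) (δ₂ : Y₁ × Yh → U₂) (_ : Measurable δ₂),
        JS γ₁ δ₂ := by
  have hJ : ∀ γ₁ γ₂, JD γ₁ γ₂ = JS γ₁ (reparamObs g γ₁ γ₂) := fun γ₁ γ₂ => by
    rw [hJD, hJS]; rfl
  have himage : ∀ γ₁, Measurable γ₁ →
      reparamObs g γ₁ '' {γ₂ | Measurable γ₂} = {δ₂ : Y₁ × Yh → U₂ | Measurable δ₂} :=
    fun _ => image_reparamObs_setOf_measurable hg hginv hgl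
  refine ⟨⟨fun hopt γ₁ δ₂ hγ₁ hδ₂ => ?_, fun hopt γ₁ γ₂ hγ₁ hγ₂ => ?_⟩,
    iInf_congr fun γ₁ => iInf_congr fun hγ₁ => ?_⟩
  · obtain ⟨γ₂, hγ₂, rfl⟩ : δ₂ ∈ reparamObs g γ₁ '' {γ₂ | Measurable γ₂} :=
      (himage γ₁ hγ₁).symm ▸ hδ₂
    exact (hJ γ₁s γ₂s).symm.trans_le ((hopt γ₁ γ₂ hγ₁ hγ₂).trans_eq (hJ γ₁ γ₂))
  · exact (hJ γ₁s γ₂s).trans_le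
      ((hopt γ₁ _ hγ₁ (hγ₂.reparamObs hg hγ₁)).trans_eq (hJ γ₁ γ₂).symm)
  · calc (⨅ (γ₂ : Y₁ × Yh' → U₂) (_ : Measurable γ₂), JD γ₁ γ₂)
        = ⨅ γ₂ ∈ {γ₂ | Measurable γ₂}, JS γ₁ (reparamObs g γ₁ γ₂) := by simp only [hJ]; rfl
      _ = ⨅ δ₂ ∈ reparamObs g γ₁ '' {γ₂ | Measurable γ₂}, JS γ₁ δ₂ := iInf_image.symm
      _ = ⨅ (δ₂ : Y₁ × Yh → U₂) (_ : Measurable δ₂), JS γ₁ δ₂ := by rw [himage γ₁ hγ₁]; rfl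

/-- **Theorem 4.2 (two decision makers): global optimality is preserved under the
policy-dependent static reduction.** Under the invertibility assumption on the dynamic
observation, a dynamic policy `(γ₁s, γ₂s)` is globally optimal for the dynamic cost `JD`
iff the corresponding static policy `(γ₁s, (y, s) ↦ γ₂s (y, g (s, γ₁s y)))` is globally
optimal for the static cost `JS`; moreover the infima of `JD` and `JS` over measurable
policies coincide. -/
theorem global_optimality_policy_dependent_static_reduction
    {Ω Ω₀ Y₁ Yh Yh' U₁ U₂ : Type*}
    [MeasurableSpace Ω] [MeasurableSpace Ω₀] [MeasurableSpace Y₁]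
    [MeasurableSpace Yh] [MeasurableSpace Yh'] [MeasurableSpace U₁] [MeasurableSpace U₂]
    (P : Measure Ω) [IsProbabilityMeasure P]
    (ω₀ : Ω → Ω₀) (y₁ : Ω → Y₁) (yhat₂ : Ω → Yh)
    (hω₀ : Measurable ω₀) (hy₁ : Measurable y₁) (hyhat₂ : Measurable yhat₂)
    (g : Yh × U₁ → Yh') (ginv : Yh' × U₁ → Yh)
    (hg : Measurable g) (hginv : Measurable ginv)
    (hgl : ∀ (s : Yh) (u : U₁), ginv (g (s, u), u) = s)
    (hgr : ∀ (t : Yh') (u : U₁), g (ginv (t, u), u) = t)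
    (c : Ω₀ × U₁ × U₂ → ℝ≥0∞) (hc : Measurable c)
    (JD : (Y₁ → U₁) → (Y₁ × Yh' → U₂) → ℝ≥0∞)
    (JS : (Y₁ → U₁) → (Y₁ × Yh → U₂) → ℝ≥0∞)
    (hJD : ∀ γ₁ γ₂, JD γ₁ γ₂
      = ∫⁻ ω, c (ω₀ ω, γ₁ (y₁ ω), γ₂ (y₁ ω, g (yhat₂ ω, γ₁ (y₁ ω)))) ∂P)
    (hJS : ∀ γ₁ δ₂, JS γ₁ δ₂
      = ∫⁻ ω, c (ω₀ ω, γ₁ (y₁ ω), δ₂ (y₁ ω, yhat₂ ω)) ∂P)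
    (γ₁s : Y₁ → U₁) (γ₂s : Y₁ × Yh' → U₂)
    (hγ₁s : Measurable γ₁s) (hγ₂s : Measurable γ₂s) :
    ((∀ (γ₁ : Y₁ → U₁) (γ₂ : Y₁ × Yh' → U₂), Measurable γ₁ → Measurable γ₂ →
        JD γ₁s γ₂s ≤ JD γ₁ γ₂)
      ↔ (∀ (γ₁ : Y₁ → U₁) (δ₂ : Y₁ × Yh → U₂), Measurable γ₁ → Measurable δ₂ →
        JS γ₁s (fun p => γ₂s (p.1, g (p.2, γ₁s p.1))) ≤ JS γ₁ δ₂))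
    ∧ (⨅ (γ₁ : Y₁ → U₁) (_ : Measurable γ₁) (γ₂ : Y₁ × Yh' → U₂) (_ : Measurable γ₂),
        JD γ₁ γ₂)
      = ⨅ (γ₁ : Y₁ → U₁) (_ : Measurable γ₁) (δ₂ : Y₁ × Yh → U₂) (_ : Measurable δ₂),
        JS γ₁ δ₂ :=
  global_optimality_policy_dependent_static_reduction_general P ω₀ y₁ yhat₂ g ginv hg hginv hgl c JD
    JS hJD hJS γ₁s γ₂s
end

section
/- (Theorem 5.2(i), two decision makers.) A control-sharing dynamic policy (γ₁*, γ₂^{cs*}) is person-by-person optimal (respectively, globally optimal) for J^{D,CS} if and only if the control-sharing static policy (γ₁*, δ₂^{cs*}) is person-by-person optimal (respectively, globally optimal) for J^{CS}, where δ₂^{cs*}(y, u, s) := γ₂^{cs*}(y, u, g(s, u)). Here person-by-person optimality of (γ₁*, γ₂) for a cost J means J(γ₁*, γ₂) ≤ J(γ₁, γ₂) for every measurable deviation γ₁ of DM1 and J(γ₁*, γ₂) ≤ J(γ₁*, β) for every measurable deviation β of DM2 in the corresponding policy class. -/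
/-!
Writing the second decision maker's dynamic policy as a static one, `β ↦ β ∘ shareControl g`,
leaves every cost unchanged, and since `g` is invertible in its first argument this
reparametrisation maps the measurable dynamic policies onto the measurable static ones. Both
optimality notions only compare costs over these policy classes, so they transfer.
-/

open MeasureTheory Function
open scoped ENNReal

section Optimality

variable {A B B' α : Type*} [Preorder α]

def IsPersonByPersonOptimal (J : A → B → α) (SA : Set A) (SB : Set B) (a : A) (b : B) : Prop :=
  (∀ a', a' ∈ SA → J a b ≤ J a' b) ∧ ∀ b', b' ∈ SB → J a b ≤ J a b'

def IsGloballyOptimal (J : A → B → α) (SA : Set A) (SB : Set B) (a : A) (b : B) : Prop :=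
  ∀ a' b', a' ∈ SA → b' ∈ SB → J a b ≤ J a' b'

variable {J : A → B → α} {J' : A → B' → α} {SA : Set A} {SB : Set B} {SB' : Set B'}
  {φ : B → B'} {a : A} {b : B}

theorem isPersonByPersonOptimal_iff_of_image_eq (hJ : ∀ a b, J a b = J' a (φ b))
    (hφ : φ '' SB = SB') :
    IsPersonByPersonOptimal J SA SB a b ↔ IsPersonByPersonOptimal J' SA SB' a (φ b) := by
  simp only [IsPersonByPersonOptimal, hJ, ← hφ, Set.forall_mem_image]

theorem isGloballyOptimal_iff_of_image_eq (hJ : ∀ a b, J a b = J' a (φ b))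
    (hφ : φ '' SB = SB') :
    IsGloballyOptimal J SA SB a b ↔ IsGloballyOptimal J' SA SB' a (φ b) := by
  simp only [IsGloballyOptimal, hJ, ← hφ]
  constructor
  · rintro h a' _ ha' ⟨b', hb', rfl⟩
    exact h a' b' ha' hb'
  · exact fun h a' b' ha' hb' => h a' _ ha' ⟨b', hb', rfl⟩

end Optimality

section ControlSharing

variable {Y U S T : Type*}

def shareControl (f : S × U → T) (q : Y × U × S) : Y × U × T :=
  (q.1, q.2.1, f (q.2.2, q.2.1))

theorem leftInverse_shareControl {f : S × U → T} {f' : T × U → S}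
    (h : ∀ s u, f' (f (s, u), u) = s) :
    LeftInverse (shareControl (Y := Y) f') (shareControl f) := fun q => by
  simp [shareControl, h]

variable [MeasurableSpace Y] [MeasurableSpace U] [MeasurableSpace S] [MeasurableSpace T]

theorem measurable_shareControl {f : S × U → T} (hf : Measurable f) :
    Measurable (shareControl (Y := Y) f) := by
  unfold shareControl
  fun_prop

end ControlSharing

theorem image_comp_setOf_measurable {X X' Z : Type*} [MeasurableSpace X] [MeasurableSpace X']
    [MeasurableSpace Z] {e : X → X'} {e' : X' → X} (he : Measurable e) (he' : Measurable e')
    (h : LeftInverse e' e) :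
    (fun β : X' → Z => β ∘ e) '' {β | Measurable β} = {δ | Measurable δ} := by
  refine Set.Subset.antisymm (Set.image_subset_iff.2 fun β hβ => hβ.comp he) fun δ hδ => ?_
  exact ⟨δ ∘ e', hδ.comp he', by simp only [comp_assoc, h.comp_eq_id, comp_id]⟩

theorem control_sharing_reduction_pbp_and_global_optimality_general
    {Ω Ω₀ Y₁ Yh Yh' U₁ U₂ : Type*}
    [MeasurableSpace Ω] [MeasurableSpace Y₁]
    [MeasurableSpace Yh] [MeasurableSpace Yh'] [MeasurableSpace U₁] [MeasurableSpace U₂]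
    (P : Measure Ω)
    (ω₀ : Ω → Ω₀) (y₁ : Ω → Y₁) (yhat₂ : Ω → Yh)
    (g : Yh × U₁ → Yh') (ginv : Yh' × U₁ → Yh)
    (hg : Measurable g) (hginv : Measurable ginv)
    (hgl : ∀ (s : Yh) (u : U₁), ginv (g (s, u), u) = s)
    (c : Ω₀ × U₁ × U₂ → ℝ≥0∞)
    (JDCS : (Y₁ → U₁) → (Y₁ × U₁ × Yh' → U₂) → ℝ≥0∞)
    (JCS : (Y₁ → U₁) → (Y₁ × U₁ × Yh → U₂) → ℝ≥0∞)
    (hJDCS : ∀ γ₁ γ₂cs, JDCS γ₁ γ₂cs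
      = ∫⁻ ω, c (ω₀ ω, γ₁ (y₁ ω),
          γ₂cs (y₁ ω, γ₁ (y₁ ω), g (yhat₂ ω, γ₁ (y₁ ω)))) ∂P)
    (hJCS : ∀ γ₁ δ₂cs, JCS γ₁ δ₂cs
      = ∫⁻ ω, c (ω₀ ω, γ₁ (y₁ ω), δ₂cs (y₁ ω, γ₁ (y₁ ω), yhat₂ ω)) ∂P)
    (γ₁s : Y₁ → U₁) (γ₂cs : Y₁ × U₁ × Yh' → U₂) :
    -- person-by-person optimality transfers both ways
    (((∀ γ₁ : Y₁ → U₁, Measurable γ₁ → JDCS γ₁s γ₂cs ≤ JDCS γ₁ γ₂cs)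
        ∧ (∀ β : Y₁ × U₁ × Yh' → U₂, Measurable β → JDCS γ₁s γ₂cs ≤ JDCS γ₁s β))
      ↔ ((∀ γ₁ : Y₁ → U₁, Measurable γ₁ →
            JCS γ₁s (fun q => γ₂cs (q.1, q.2.1, g (q.2.2, q.2.1)))
              ≤ JCS γ₁ (fun q => γ₂cs (q.1, q.2.1, g (q.2.2, q.2.1))))
        ∧ (∀ β : Y₁ × U₁ × Yh → U₂, Measurable β →
            JCS γ₁s (fun q => γ₂cs (q.1, q.2.1, g (q.2.2, q.2.1))) ≤ JCS γ₁s β)))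
    -- global optimality transfers both ways
    ∧ ((∀ (γ₁ : Y₁ → U₁) (β : Y₁ × U₁ × Yh' → U₂), Measurable γ₁ → Measurable β →
          JDCS γ₁s γ₂cs ≤ JDCS γ₁ β)
      ↔ (∀ (γ₁ : Y₁ → U₁) (β : Y₁ × U₁ × Yh → U₂), Measurable γ₁ → Measurable β →
          JCS γ₁s (fun q => γ₂cs (q.1, q.2.1, g (q.2.2, q.2.1))) ≤ JCS γ₁ β)) := by
  have hcost : ∀ γ₁ β, JDCS γ₁ β = JCS γ₁ (β ∘ shareControl g) := fun γ₁ β => by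
    rw [hJDCS, hJCS]
    rfl
  have hpolicies := image_comp_setOf_measurable (Z := U₂) (measurable_shareControl (Y := Y₁) hg)
    (measurable_shareControl hginv) (leftInverse_shareControl hgl)
  exact ⟨isPersonByPersonOptimal_iff_of_image_eq (SA := {γ₁ | Measurable γ₁}) hcost hpolicies,
    isGloballyOptimal_iff_of_image_eq (SA := {γ₁ | Measurable γ₁}) hcost hpolicies⟩

/-- **Theorem 5.2(i) (two decision makers): the static measurements with control-sharing
reduction preserves person-by-person and global optimality.** A control-sharing dynamic
policy `(γ₁s, γ₂cs)` is person-by-person optimal (resp. globally optimal) for `JDCS` iff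
the control-sharing static policy `(γ₁s, (y, u, s) ↦ γ₂cs (y, u, g (s, u)))` is
person-by-person optimal (resp. globally optimal) for `JCS`. -/
theorem control_sharing_reduction_pbp_and_global_optimality
    {Ω Ω₀ Y₁ Yh Yh' U₁ U₂ : Type*}
    [MeasurableSpace Ω] [MeasurableSpace Ω₀] [MeasurableSpace Y₁]
    [MeasurableSpace Yh] [MeasurableSpace Yh'] [MeasurableSpace U₁] [MeasurableSpace U₂]
    (P : Measure Ω) [IsProbabilityMeasure P]
    (ω₀ : Ω → Ω₀) (y₁ : Ω → Y₁) (yhat₂ : Ω → Yh)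
    (hω₀ : Measurable ω₀) (hy₁ : Measurable y₁) (hyhat₂ : Measurable yhat₂)
    (g : Yh × U₁ → Yh') (ginv : Yh' × U₁ → Yh)
    (hg : Measurable g) (hginv : Measurable ginv)
    (hgl : ∀ (s : Yh) (u : U₁), ginv (g (s, u), u) = s)
    (hgr : ∀ (t : Yh') (u : U₁), g (ginv (t, u), u) = t)
    (c : Ω₀ × U₁ × U₂ → ℝ≥0∞) (hc : Measurable c)
    (JDCS : (Y₁ → U₁) → (Y₁ × U₁ × Yh' → U₂) → ℝ≥0∞)
    (JCS : (Y₁ → U₁) → (Y₁ × U₁ × Yh → U₂) → ℝ≥0∞)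
    (hJDCS : ∀ γ₁ γ₂cs, JDCS γ₁ γ₂cs
      = ∫⁻ ω, c (ω₀ ω, γ₁ (y₁ ω),
          γ₂cs (y₁ ω, γ₁ (y₁ ω), g (yhat₂ ω, γ₁ (y₁ ω)))) ∂P)
    (hJCS : ∀ γ₁ δ₂cs, JCS γ₁ δ₂cs
      = ∫⁻ ω, c (ω₀ ω, γ₁ (y₁ ω), δ₂cs (y₁ ω, γ₁ (y₁ ω), yhat₂ ω)) ∂P)
    (γ₁s : Y₁ → U₁) (γ₂cs : Y₁ × U₁ × Yh' → U₂)
    (hγ₁s : Measurable γ₁s) (hγ₂cs : Measurable γ₂cs) :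
    -- person-by-person optimality transfers both ways
    (((∀ γ₁ : Y₁ → U₁, Measurable γ₁ → JDCS γ₁s γ₂cs ≤ JDCS γ₁ γ₂cs)
        ∧ (∀ β : Y₁ × U₁ × Yh' → U₂, Measurable β → JDCS γ₁s γ₂cs ≤ JDCS γ₁s β))
      ↔ ((∀ γ₁ : Y₁ → U₁, Measurable γ₁ →
            JCS γ₁s (fun q => γ₂cs (q.1, q.2.1, g (q.2.2, q.2.1)))
              ≤ JCS γ₁ (fun q => γ₂cs (q.1, q.2.1, g (q.2.2, q.2.1))))
        ∧ (∀ β : Y₁ × U₁ × Yh → U₂, Measurable β →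
            JCS γ₁s (fun q => γ₂cs (q.1, q.2.1, g (q.2.2, q.2.1))) ≤ JCS γ₁s β)))
    -- global optimality transfers both ways
    ∧ ((∀ (γ₁ : Y₁ → U₁) (β : Y₁ × U₁ × Yh' → U₂), Measurable γ₁ → Measurable β →
          JDCS γ₁s γ₂cs ≤ JDCS γ₁ β)
      ↔ (∀ (γ₁ : Y₁ → U₁) (β : Y₁ × U₁ × Yh → U₂), Measurable γ₁ → Measurable β →
          JCS γ₁s (fun q => γ₂cs (q.1, q.2.1, g (q.2.2, q.2.1))) ≤ JCS γ₁ β)) :=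
  control_sharing_reduction_pbp_and_global_optimality_general P ω₀ y₁ yhat₂ g ginv hg hginv hgl c
    JDCS JCS hJDCS hJCS γ₁s γ₂cs
end

section
/- (Theorem 5.2(ii), two decision makers.) If the dynamic policy (γ₁*, γ₂*) with γ₂* : Y₁ × Ŷ' → U₂ is person-by-person optimal for J^D (i.e., J^D(γ₁*, γ₂*) ≤ J^D(γ₁, γ₂*) for every measurable γ₁ : Y₁ → U₁ and J^D(γ₁*, γ₂*) ≤ J^D(γ₁*, γ₂) for every measurable γ₂ : Y₁ × Ŷ' → U₂), then the control-sharing dynamic policy (γ₁*, γ̃₂*), where γ̃₂*(y, u, t) := γ₂*(y, t) ignores the shared action, is person-by-person optimal for J^{D,CS}: J^{D,CS}(γ₁*, γ̃₂*) ≤ J^{D,CS}(γ₁, γ̃₂*) for every measurable γ₁ : Y₁ → U₁, and J^{D,CS}(γ₁*, γ̃₂*) ≤ J^{D,CS}(γ₁*, β) for every measurable β : Y₁ × U₁ × Ŷ' → U₂. -/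
/-!
Once decision maker 1 fixes a measurable policy `γ₁`, the shared action `γ₁ y₁` is a
measurable function of decision maker 2's own observation `y₁`. Hence every control-sharing
policy `β` of decision maker 2 has the same cost as the dynamic policy
`(y, t) ↦ β (y, γ₁ y, t)`, and a dynamic policy lifted to ignore the shared action keeps its
cost. Both person-by-person inequalities therefore transfer from `J^D` to `J^{D,CS}`.
-/

open MeasureTheory
open scoped ENNReal

section ControlSharing

variable {Ω Ω₀ Y₁ Yh Yh' U₁ U₂ : Type*} [MeasurableSpace Ω]
  (P : Measure Ω) (ω₀ : Ω → Ω₀) (y₁ : Ω → Y₁) (yhat₂ : Ω → Yh)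
  (g : Yh × U₁ → Yh') (c : Ω₀ × U₁ × U₂ → ℝ≥0∞)

noncomputable def dynamicCost (γ₁ : Y₁ → U₁) (γ₂ : Y₁ × Yh' → U₂) : ℝ≥0∞ :=
  ∫⁻ ω, c (ω₀ ω, γ₁ (y₁ ω), γ₂ (y₁ ω, g (yhat₂ ω, γ₁ (y₁ ω)))) ∂P

noncomputable def controlSharingCost (γ₁ : Y₁ → U₁) (γ₂cs : Y₁ × U₁ × Yh' → U₂) : ℝ≥0∞ :=
  ∫⁻ ω, c (ω₀ ω, γ₁ (y₁ ω), γ₂cs (y₁ ω, γ₁ (y₁ ω), g (yhat₂ ω, γ₁ (y₁ ω)))) ∂P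

def substituteAction (γ₁ : Y₁ → U₁) (β : Y₁ × U₁ × Yh' → U₂) : Y₁ × Yh' → U₂ :=
  fun p => β (p.1, γ₁ p.1, p.2)

theorem controlSharingCost_ignoreAction (γ₁ : Y₁ → U₁) (γ₂ : Y₁ × Yh' → U₂) :
    controlSharingCost P ω₀ y₁ yhat₂ g c γ₁ (fun q => γ₂ (q.1, q.2.2))
      = dynamicCost P ω₀ y₁ yhat₂ g c γ₁ γ₂ :=
  rfl

theorem controlSharingCost_eq_dynamicCost_substituteAction (γ₁ : Y₁ → U₁)
    (β : Y₁ × U₁ × Yh' → U₂) :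
    controlSharingCost P ω₀ y₁ yhat₂ g c γ₁ β
      = dynamicCost P ω₀ y₁ yhat₂ g c γ₁ (substituteAction γ₁ β) :=
  rfl

end ControlSharing

theorem Measurable.substituteAction {Y₁ Yh' U₁ U₂ : Type*} [MeasurableSpace Y₁]
    [MeasurableSpace Yh'] [MeasurableSpace U₁] [MeasurableSpace U₂] {γ₁ : Y₁ → U₁}
    {β : Y₁ × U₁ × Yh' → U₂} (hγ₁ : Measurable γ₁) (hβ : Measurable β) :
    Measurable (substituteAction γ₁ β) :=
  hβ.comp (measurable_fst.prodMk ((hγ₁.comp measurable_fst).prodMk measurable_snd))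

theorem pbp_dynamic_to_control_sharing_dynamic_general
    {Ω Ω₀ Y₁ Yh Yh' U₁ U₂ : Type*}
    [MeasurableSpace Ω] [MeasurableSpace Y₁]
    [MeasurableSpace Yh'] [MeasurableSpace U₁] [MeasurableSpace U₂]
    (P : Measure Ω)
    (ω₀ : Ω → Ω₀) (y₁ : Ω → Y₁) (yhat₂ : Ω → Yh)
    (g : Yh × U₁ → Yh')
    (c : Ω₀ × U₁ × U₂ → ℝ≥0∞)
    (JD : (Y₁ → U₁) → (Y₁ × Yh' → U₂) → ℝ≥0∞)
    (JDCS : (Y₁ → U₁) → (Y₁ × U₁ × Yh' → U₂) → ℝ≥0∞)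
    (hJD : ∀ γ₁ γ₂, JD γ₁ γ₂
      = ∫⁻ ω, c (ω₀ ω, γ₁ (y₁ ω), γ₂ (y₁ ω, g (yhat₂ ω, γ₁ (y₁ ω)))) ∂P)
    (hJDCS : ∀ γ₁ γ₂cs, JDCS γ₁ γ₂cs
      = ∫⁻ ω, c (ω₀ ω, γ₁ (y₁ ω),
          γ₂cs (y₁ ω, γ₁ (y₁ ω), g (yhat₂ ω, γ₁ (y₁ ω)))) ∂P)
    (γ₁s : Y₁ → U₁) (γ₂s : Y₁ × Yh' → U₂)
    (hγ₁s : Measurable γ₁s)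
    (hpbp₁ : ∀ γ₁ : Y₁ → U₁, Measurable γ₁ → JD γ₁s γ₂s ≤ JD γ₁ γ₂s)
    (hpbp₂ : ∀ γ₂ : Y₁ × Yh' → U₂, Measurable γ₂ → JD γ₁s γ₂s ≤ JD γ₁s γ₂) :
    (∀ γ₁ : Y₁ → U₁, Measurable γ₁ →
      JDCS γ₁s (fun q => γ₂s (q.1, q.2.2)) ≤ JDCS γ₁ (fun q => γ₂s (q.1, q.2.2)))
    ∧ (∀ β : Y₁ × U₁ × Yh' → U₂, Measurable β →
      JDCS γ₁s (fun q => γ₂s (q.1, q.2.2)) ≤ JDCS γ₁s β) := by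
  obtain rfl : JD = dynamicCost P ω₀ y₁ yhat₂ g c := funext₂ hJD
  obtain rfl : JDCS = controlSharingCost P ω₀ y₁ yhat₂ g c := funext₂ hJDCS
  simp only [controlSharingCost_ignoreAction]
  refine ⟨hpbp₁, fun β hβ => ?_⟩
  rw [controlSharingCost_eq_dynamicCost_substituteAction]
  exact hpbp₂ _ (hγ₁s.substituteAction hβ)

/-- **Theorem 5.2(ii) (two decision makers).** If the dynamic policy `(γ₁s, γ₂s)` is
person-by-person optimal for `JD`, then the control-sharing dynamic policy
`(γ₁s, (y, u, t) ↦ γ₂s (y, t))` (which ignores the shared action) is person-by-person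
optimal for `JDCS`. -/
theorem pbp_dynamic_to_control_sharing_dynamic
    {Ω Ω₀ Y₁ Yh Yh' U₁ U₂ : Type*}
    [MeasurableSpace Ω] [MeasurableSpace Ω₀] [MeasurableSpace Y₁]
    [MeasurableSpace Yh] [MeasurableSpace Yh'] [MeasurableSpace U₁] [MeasurableSpace U₂]
    (P : Measure Ω) [IsProbabilityMeasure P]
    (ω₀ : Ω → Ω₀) (y₁ : Ω → Y₁) (yhat₂ : Ω → Yh)
    (hω₀ : Measurable ω₀) (hy₁ : Measurable y₁) (hyhat₂ : Measurable yhat₂)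
    (g : Yh × U₁ → Yh') (hg : Measurable g)
    (c : Ω₀ × U₁ × U₂ → ℝ≥0∞) (hc : Measurable c)
    (JD : (Y₁ → U₁) → (Y₁ × Yh' → U₂) → ℝ≥0∞)
    (JDCS : (Y₁ → U₁) → (Y₁ × U₁ × Yh' → U₂) → ℝ≥0∞)
    (hJD : ∀ γ₁ γ₂, JD γ₁ γ₂
      = ∫⁻ ω, c (ω₀ ω, γ₁ (y₁ ω), γ₂ (y₁ ω, g (yhat₂ ω, γ₁ (y₁ ω)))) ∂P)
    (hJDCS : ∀ γ₁ γ₂cs, JDCS γ₁ γ₂cs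
      = ∫⁻ ω, c (ω₀ ω, γ₁ (y₁ ω),
          γ₂cs (y₁ ω, γ₁ (y₁ ω), g (yhat₂ ω, γ₁ (y₁ ω)))) ∂P)
    (γ₁s : Y₁ → U₁) (γ₂s : Y₁ × Yh' → U₂)
    (hγ₁s : Measurable γ₁s) (hγ₂s : Measurable γ₂s)
    (hpbp₁ : ∀ γ₁ : Y₁ → U₁, Measurable γ₁ → JD γ₁s γ₂s ≤ JD γ₁ γ₂s)
    (hpbp₂ : ∀ γ₂ : Y₁ × Yh' → U₂, Measurable γ₂ → JD γ₁s γ₂s ≤ JD γ₁s γ₂) :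
    (∀ γ₁ : Y₁ → U₁, Measurable γ₁ →
      JDCS γ₁s (fun q => γ₂s (q.1, q.2.2)) ≤ JDCS γ₁ (fun q => γ₂s (q.1, q.2.2)))
    ∧ (∀ β : Y₁ × U₁ × Yh' → U₂, Measurable β →
      JDCS γ₁s (fun q => γ₂s (q.1, q.2.2)) ≤ JDCS γ₁s β) :=
  pbp_dynamic_to_control_sharing_dynamic_general P ω₀ y₁ yhat₂ g c JD JDCS hJD hJDCS γ₁s γ₂s hγ₁s
    hpbp₁ hpbp₂
end

section
/- (Example 4.1, negative part: failure of person-by-person optimality under the policy-dependent static reduction.) Fix α ∈ (0,1) and fix DM2's dynamic policy γ₂*(y, t) = t, so that DM2's action is u² = ω₂ + u¹. Then: (a) for every t ∈ ℝ, the constant DM1 policy γ₁ ≡ t gives a dynamic-cost integrand equal to −α·t² pointwise, so J^D(t, γ₂*) = −α·t²; (b) consequently, for every M ∈ ℝ there is a measurable γ₁ : ℝ → ℝ with J^D(γ₁, γ₂*) < M, i.e., the infimum of J^D(·, γ₂*) over measurable DM1 policies is −∞; hence (c) the pair (γ₁* ≡ 0, γ₂*), which corresponds under the policy-dependent static reduction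 to the person-by-person optimal static policy (0, (y,s) ↦ s), is not person-by-person optimal for the dynamic team (P^D), since J^D(0, γ₂*) = 0 > J^D(t, γ₂*) for every t ≠ 0. -/
open MeasureTheory Filter

/-! When DM2 simply reports `u² = ω₂ + u¹`, the squared term of the cost vanishes identically,
so a constant DM1 action `t` costs exactly `-α t²`. This is unbounded below in `t`, whereas
the candidate pair with `u¹ ≡ 0` has cost `0`; already the constant DM1 deviation `t = 1`
improves on it. -/

theorem exists_neg_mul_sq_lt {α : ℝ} (hα : 0 < α) (M : ℝ) : ∃ t : ℝ, -α * t ^ 2 < M := by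
  have hbot : Tendsto (fun t : ℝ => -α * t ^ 2) atTop atBot := by
    simpa only [neg_mul, Function.comp_def] using
      tendsto_neg_atTop_atBot.comp ((tendsto_pow_atTop two_ne_zero).const_mul_atTop hα)
  exact (hbot.eventually (eventually_lt_atBot M)).exists

section ReportingCost

variable {α : ℝ} {c : ℝ → ℝ → ℝ → ℝ}

theorem cost_add_report
    (hc : ∀ w u₁ u₂, c w u₁ u₂ = (u₁ - u₂ + w) ^ 2 - α * u₁ ^ 2) (w t : ℝ) :
    c w t (w + t) = -α * t ^ 2 := by
  rw [hc]; ring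

theorem integral_cost_add_report
    (hc : ∀ w u₁ u₂, c w u₁ u₂ = (u₁ - u₂ + w) ^ 2 - α * u₁ ^ 2)
    {Ω : Type*} [MeasurableSpace Ω] (P : Measure Ω) [IsProbabilityMeasure P] (ω₂ : Ω → ℝ) (t : ℝ) :
    ∫ ω, c (ω₂ ω) t (ω₂ ω + t) ∂P = -α * t ^ 2 := by
  simp only [cost_add_report hc, integral_const, probReal_univ, one_smul]

end ReportingCost

theorem example41_negative_general
    {Ω : Type*} [MeasurableSpace Ω] (P : Measure Ω) [IsProbabilityMeasure P]
    (ω₁ ω₂ : Ω → ℝ)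
    (α : ℝ) (hα : α ∈ Set.Ioo (0 : ℝ) 1)
    (c : ℝ → ℝ → ℝ → ℝ)
    (hc : ∀ w u₁ u₂, c w u₁ u₂ = (u₁ - u₂ + w) ^ 2 - α * u₁ ^ 2)
    (JD : (ℝ → ℝ) → (ℝ × ℝ → ℝ) → ℝ)
    (hJD : ∀ γ₁ γ₂, JD γ₁ γ₂
      = ∫ ω, c (ω₂ ω) (γ₁ (ω₁ ω)) (γ₂ (ω₁ ω, ω₂ ω + γ₁ (ω₁ ω))) ∂P) :
    -- (a)
    (∀ t : ℝ,
      (∀ ω, c (ω₂ ω) t ((fun p : ℝ × ℝ => p.2) (ω₁ ω, ω₂ ω + t)) = -α * t ^ 2)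
      ∧ JD (fun _ => t) (fun p => p.2) = -α * t ^ 2)
    -- (b)
    ∧ (∀ M : ℝ, ∃ γ₁ : ℝ → ℝ, Measurable γ₁ ∧ JD γ₁ (fun p => p.2) < M)
    -- (c)
    ∧ (∀ t : ℝ, t ≠ 0 →
        JD (fun _ => t) (fun p => p.2) < JD (fun _ => 0) (fun p => p.2))
    ∧ ¬ ((∀ γ₁ : ℝ → ℝ, Measurable γ₁ →
            JD (fun _ => 0) (fun p => p.2) ≤ JD γ₁ (fun p => p.2))
        ∧ (∀ γ₂ : ℝ × ℝ → ℝ, Measurable γ₂ →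
            JD (fun _ => 0) (fun p => p.2) ≤ JD (fun _ => 0) γ₂)) := by
  have hconst (t : ℝ) : JD (fun _ => t) (fun p => p.2) = -α * t ^ 2 := by
    rw [hJD]; exact integral_cost_add_report hc P ω₂ t
  have hdev (t : ℝ) (ht : t ≠ 0) :
      JD (fun _ => t) (fun p => p.2) < JD (fun _ => 0) (fun p => p.2) := by
    rw [hconst, hconst]
    have : 0 < α * t ^ 2 := mul_pos hα.1 (by positivity)
    linarith
  refine ⟨fun t => ⟨fun ω => cost_add_report hc _ t, hconst t⟩, fun M => ?_, hdev, ?_⟩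
  · obtain ⟨t, ht⟩ := exists_neg_mul_sq_lt hα.1 M
    exact ⟨fun _ => t, measurable_const, (hconst t).trans_lt ht⟩
  · rintro ⟨hDM1, -⟩
    exact (hDM1 (fun _ => 1) measurable_const).not_gt (hdev 1 one_ne_zero)

/-- **Example 4.1 (negative part): failure of person-by-person optimality under the
policy-dependent static reduction.** With the cost
`c (ω₂, u¹, u²) = (u¹ − u² + ω₂)² − α (u¹)²`, `α ∈ (0,1)`, and DM2's dynamic policy
`γ₂* (y, t) = t` (so `u² = ω₂ + u¹`): constant DM1 policies `t` give dynamic cost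
`−α t²`, the infimum of `J^D (·, γ₂*)` over measurable DM1 policies is `−∞`, and the
pair `(γ₁* ≡ 0, γ₂*)` is not person-by-person optimal for the dynamic team `(P^D)`. -/
theorem example41_negative
    {Ω : Type*} [MeasurableSpace Ω] (P : Measure Ω) [IsProbabilityMeasure P]
    (ω₁ ω₂ : Ω → ℝ) (hω₁ : Measurable ω₁) (hω₂ : Measurable ω₂)
    (α : ℝ) (hα : α ∈ Set.Ioo (0 : ℝ) 1)
    (c : ℝ → ℝ → ℝ → ℝ)
    (hc : ∀ w u₁ u₂, c w u₁ u₂ = (u₁ - u₂ + w) ^ 2 - α * u₁ ^ 2)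
    (JD : (ℝ → ℝ) → (ℝ × ℝ → ℝ) → ℝ)
    (hJD : ∀ γ₁ γ₂, JD γ₁ γ₂
      = ∫ ω, c (ω₂ ω) (γ₁ (ω₁ ω)) (γ₂ (ω₁ ω, ω₂ ω + γ₁ (ω₁ ω))) ∂P) :
    -- (a)
    (∀ t : ℝ,
      (∀ ω, c (ω₂ ω) t ((fun p : ℝ × ℝ => p.2) (ω₁ ω, ω₂ ω + t)) = -α * t ^ 2)
      ∧ JD (fun _ => t) (fun p => p.2) = -α * t ^ 2)
    -- (b)
    ∧ (∀ M : ℝ, ∃ γ₁ : ℝ → ℝ, Measurable γ₁ ∧ JD γ₁ (fun p => p.2) < M)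
    -- (c)
    ∧ (∀ t : ℝ, t ≠ 0 →
        JD (fun _ => t) (fun p => p.2) < JD (fun _ => 0) (fun p => p.2))
    ∧ ¬ ((∀ γ₁ : ℝ → ℝ, Measurable γ₁ →
            JD (fun _ => 0) (fun p => p.2) ≤ JD γ₁ (fun p => p.2))
        ∧ (∀ γ₂ : ℝ × ℝ → ℝ, Measurable γ₂ →
            JD (fun _ => 0) (fun p => p.2) ≤ JD (fun _ => 0) γ₂)) :=
  example41_negative_general P ω₁ ω₂ α hα c hc JD hJD
end

section
/- (Example 4.2, negative part: failure of person-by-person optimality in the static reduction.) Fix α ∈ (0,1) and β > 1, and fix DM2's static policy δ₂*(y, s) = s, so that DM2's action is u² = ω₂. Then: (a) for every t ∈ ℝ, the constant DM1 policy γ₁ ≡ t gives a static-cost integrand equal to (α − 1)·t² pointwise, so J^S(t, δ₂*) = (α − 1)·t²; (b) consequently, for every M ∈ ℝ there is a measurable γ₁ : ℝ → ℝ with J^S(γ₁, δ₂*) < M, i.e., the infimum of J^S(·, δ₂*) over measurable DM1 policies is −∞; hence (c) the pair (γ₁* ≡ 0, δ₂*), which is the policy-dependent static reduction of the person-by-person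 optimal dynamic policy of Example 4.2, is not person-by-person optimal for the static team (P^S). -/
open MeasureTheory Filter

theorem exists_mul_sq_lt_of_neg {a : ℝ} (ha : a < 0) (M : ℝ) : ∃ t : ℝ, a * t ^ 2 < M :=
  (((tendsto_pow_atTop two_ne_zero).const_mul_atTop_of_neg ha).eventually
    (eventually_lt_atBot M)).exists

theorem example42_negative_general
    {Ω : Type*} [MeasurableSpace Ω] (P : Measure Ω) [IsProbabilityMeasure P]
    (ω₁ ω₂ : Ω → ℝ)
    (α β : ℝ) (hα : α ∈ Set.Ioo (0 : ℝ) 1)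
    (c : ℝ → ℝ → ℝ → ℝ)
    (hc : ∀ w u₁ u₂, c w u₁ u₂
      = α * u₁ ^ 2 + β * (u₂ - w) ^ 2 - (u₁ - u₂ + w) ^ 2)
    (JS : (ℝ → ℝ) → (ℝ × ℝ → ℝ) → ℝ)
    (hJS : ∀ γ₁ δ₂, JS γ₁ δ₂
      = ∫ ω, c (ω₂ ω) (γ₁ (ω₁ ω)) (δ₂ (ω₁ ω, ω₂ ω)) ∂P) :
    -- (a)
    (∀ t : ℝ,
      (∀ ω, c (ω₂ ω) t ((fun p : ℝ × ℝ => p.2) (ω₁ ω, ω₂ ω)) = (α - 1) * t ^ 2)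
      ∧ JS (fun _ => t) (fun p => p.2) = (α - 1) * t ^ 2)
    -- (b)
    ∧ (∀ M : ℝ, ∃ γ₁ : ℝ → ℝ, Measurable γ₁ ∧ JS γ₁ (fun p => p.2) < M)
    -- (c)
    ∧ ¬ ((∀ γ₁ : ℝ → ℝ, Measurable γ₁ →
            JS (fun _ => 0) (fun p => p.2) ≤ JS γ₁ (fun p => p.2))
        ∧ (∀ δ₂ : ℝ × ℝ → ℝ, Measurable δ₂ →
            JS (fun _ => 0) (fun p => p.2) ≤ JS (fun _ => 0) δ₂)) := by
  have hcost : ∀ w t, c w t w = (α - 1) * t ^ 2 := fun w t => by rw [hc]; ring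
  have ha : ∀ t : ℝ,
      (∀ ω, c (ω₂ ω) t ((fun p : ℝ × ℝ => p.2) (ω₁ ω, ω₂ ω)) = (α - 1) * t ^ 2)
      ∧ JS (fun _ => t) (fun p => p.2) = (α - 1) * t ^ 2 := fun t =>
    ⟨fun ω => hcost (ω₂ ω) t, by simp only [hJS, hcost, integral_const, probReal_univ, one_smul]⟩
  have hb : ∀ M : ℝ, ∃ γ₁ : ℝ → ℝ, Measurable γ₁ ∧ JS γ₁ (fun p => p.2) < M := fun M =>
    let ⟨t, ht⟩ := exists_mul_sq_lt_of_neg (sub_neg.2 hα.2) M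
    ⟨fun _ => t, measurable_const, (ha t).2 ▸ ht⟩
  refine ⟨ha, hb, fun ⟨hγ₁_best, _⟩ => ?_⟩
  obtain ⟨γ₁, hγ₁, hlt⟩ := hb (JS (fun _ => 0) (fun p => p.2))
  exact (hγ₁_best γ₁ hγ₁).not_gt hlt

/-- **Example 4.2 (negative part): failure of person-by-person optimality in the static
reduction.** With the cost `c (ω₂, u¹, u²) = α (u¹)² + β (u² − ω₂)² − (u¹ − u² + ω₂)²`,
`α ∈ (0,1)`, `β > 1`, and DM2's static policy `δ₂* (y, s) = s` (so `u² = ω₂`): constant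
DM1 policies `t` give static cost `(α − 1) t²`, the infimum of `J^S (·, δ₂*)` over
measurable DM1 policies is `−∞`, and the pair `(γ₁* ≡ 0, δ₂*)` is not person-by-person
optimal for the static team `(P^S)`. -/
theorem example42_negative
    {Ω : Type*} [MeasurableSpace Ω] (P : Measure Ω) [IsProbabilityMeasure P]
    (ω₁ ω₂ : Ω → ℝ) (hω₁ : Measurable ω₁) (hω₂ : Measurable ω₂)
    (α β : ℝ) (hα : α ∈ Set.Ioo (0 : ℝ) 1) (hβ : 1 < β)
    (c : ℝ → ℝ → ℝ → ℝ)
    (hc : ∀ w u₁ u₂, c w u₁ u₂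
      = α * u₁ ^ 2 + β * (u₂ - w) ^ 2 - (u₁ - u₂ + w) ^ 2)
    (JS : (ℝ → ℝ) → (ℝ × ℝ → ℝ) → ℝ)
    (hJS : ∀ γ₁ δ₂, JS γ₁ δ₂
      = ∫ ω, c (ω₂ ω) (γ₁ (ω₁ ω)) (δ₂ (ω₁ ω, ω₂ ω)) ∂P) :
    -- (a)
    (∀ t : ℝ,
      (∀ ω, c (ω₂ ω) t ((fun p : ℝ × ℝ => p.2) (ω₁ ω, ω₂ ω)) = (α - 1) * t ^ 2)
      ∧ JS (fun _ => t) (fun p => p.2) = (α - 1) * t ^ 2)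
    -- (b)
    ∧ (∀ M : ℝ, ∃ γ₁ : ℝ → ℝ, Measurable γ₁ ∧ JS γ₁ (fun p => p.2) < M)
    -- (c)
    ∧ ¬ ((∀ γ₁ : ℝ → ℝ, Measurable γ₁ →
            JS (fun _ => 0) (fun p => p.2) ≤ JS γ₁ (fun p => p.2))
        ∧ (∀ δ₂ : ℝ × ℝ → ℝ, Measurable δ₂ →
            JS (fun _ => 0) (fun p => p.2) ≤ JS (fun _ => 0) δ₂)) :=
  example42_negative_general P ω₁ ω₂ α β hα c hc JS hJS
end

section
/- (Instance of Proposition 5.1(i): a person-by-person optimal policy exists under control sharing but not for the static reduction.) Fix α ∈ (0,1) and β > 1 and assume E[ω₂²] < ∞. Then: (a) the control-sharing policy γ₁* ≡ 0, δ₂^{cs*}(y, u, s) = s + u is person-by-person optimal for (P^{CS}): J^{CS}(γ₁*, δ₂^{cs*}) = 0; for every measurable γ₁ : ℝ → ℝ the integrand of J^{CS}(γ₁, δ₂^{cs*}) equals (α + β)·γ₁(ω₁)² pointwise, hence is ≥ 0; and for every measurable β̂ : ℝ × ℝ × ℝ → ℝ the integrand of J^{CS}(γ₁*, β̂) equals (β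 − 1)·(β̂(ω₁, 0, ω₂) − ω₂)² pointwise, hence is ≥ 0. (b) In contrast, for every measurable δ₂ : ℝ × ℝ → ℝ with E[(δ₂(ω₁, ω₂) − ω₂)²] < ∞, one has J^S(t, δ₂) = (α − 1)·t² + 2t·E[δ₂(ω₁, ω₂) − ω₂] + (β − 1)·E[(δ₂(ω₁, ω₂) − ω₂)²] for every constant DM1 policy t ∈ ℝ, so the infimum over t ∈ ℝ of J^S(t, δ₂) is −∞; consequently no static policy with finite expected cost is person-by-person optimal for (P^S). -/
/-!
Write `g` for DM1's action and `e = u² - ω₂` for DM2's error (`u²` being DM2's action). The cost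
is then `(α - 1) g² + 2 g e + (β - 1) e²`, concave in `g` and convex in `e`. Under control sharing
DM2 cancels DM1's action exactly, so `(0, (y, u, s) ↦ s + u)` has cost zero, the least possible
value among the deviations considered. In the static model, let `(γ₁, δ₂)` have integrable cost
and be person-by-person optimal. Completing the square in `e`, DM2 can lower the cost pointwise to
`-min (a g², n)` with `a = 1/(β - 1) + 1 - α > 0`, for every `n`; optimality of `δ₂` and monotone
convergence force `g² ∈ L¹`, hence `e² ∈ L¹`. The cost of a constant DM1 action `t` is then a
quadratic in `t` with leading coefficient `α - 1 < 0`, unbounded below, contradicting the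
optimality of `γ₁`.
-/

open MeasureTheory Filter
open scoped ENNReal

def teamCost (α β w u₁ u₂ : ℝ) : ℝ :=
  α * u₁ ^ 2 + β * (u₂ - w) ^ 2 - (u₁ - u₂ + w) ^ 2

lemma teamCost_eq (α β w u₁ u₂ : ℝ) :
    teamCost α β w u₁ u₂ = (α - 1) * u₁ ^ 2 + 2 * u₁ * (u₂ - w) + (β - 1) * (u₂ - w) ^ 2 := by
  unfold teamCost; ring

@[simp]
lemma teamCost_zero_left (α β w u : ℝ) : teamCost α β w 0 u = (β - 1) * (u - w) ^ 2 := by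
  unfold teamCost; ring

lemma teamCost_add_self (α β w u : ℝ) : teamCost α β w u (w + u) = (α + β) * u ^ 2 := by
  unfold teamCost; ring

/-- DM2's best response `e = -g/(β - 1)` costs `-(1/(β - 1) + 1 - α) g²`; overshooting it by
`√(s/(β - 1))` raises the cost by exactly `s`. -/
lemma teamCost_add_sqrt {α β : ℝ} (hβ : 1 < β) (w g : ℝ) {s : ℝ} (hs : 0 ≤ s) :
    teamCost α β w g (w + (-g / (β - 1) + √(s / (β - 1))))
      = s - (1 / (β - 1) + 1 - α) * g ^ 2 := by
  have hk : 0 < β - 1 := sub_pos.2 hβ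
  have hsq : (β - 1) * √(s / (β - 1)) ^ 2 = s := by
    rw [Real.sq_sqrt (by positivity)]; field_simp
  rw [teamCost_eq, add_sub_cancel_left]
  generalize √(s / (β - 1)) = r at hsq ⊢
  subst hsq
  field_simp
  ring

lemma tendsto_quadratic_atBot {a : ℝ} (ha : a < 0) (b c : ℝ) :
    Tendsto (fun t : ℝ => a * t ^ 2 + 2 * t * b + c) atTop atBot := by
  have hlin : Tendsto (fun t : ℝ => a * t + 2 * b) atTop atBot :=
    tendsto_atBot_add_const_right _ _ (tendsto_id.const_mul_atTop_of_neg ha)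
  have h : Tendsto (fun t : ℝ => (a * t + 2 * b) * t + c) atTop atBot :=
    tendsto_atBot_add_const_right _ c (hlin.atBot_mul_atTop₀ tendsto_id)
  refine h.congr fun t => ?_
  ring

section Integrals

variable {Ω : Type*} [MeasurableSpace Ω] {μ : Measure Ω}

lemma integrable_of_forall_integral_min_le [IsFiniteMeasure μ] {f : Ω → ℝ} (hf : Measurable f)
    (hf0 : ∀ ω, 0 ≤ f ω) {C : ℝ} (hC : ∀ n : ℕ, ∫ ω, min (f ω) n ∂μ ≤ C) :
    Integrable f μ := by
  refine ⟨hf.aestronglyMeasurable, ?_⟩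
  rw [hasFiniteIntegral_iff_ofReal (ae_of_all _ hf0)]
  have hmin_nonneg (n : ℕ) (ω : Ω) : 0 ≤ min (f ω) n := le_min (hf0 ω) n.cast_nonneg
  have hsup (ω : Ω) : ENNReal.ofReal (f ω) = ⨆ n : ℕ, ENNReal.ofReal (min (f ω) n) :=
    le_antisymm
      (le_iSup_of_le ⌈f ω⌉₊ (by rw [min_eq_left (Nat.le_ceil _)]))
      (iSup_le fun n => ENNReal.ofReal_le_ofReal (min_le_left _ _))
  calc ∫⁻ ω, ENNReal.ofReal (f ω) ∂μ
      = ⨆ n : ℕ, ∫⁻ ω, ENNReal.ofReal (min (f ω) n) ∂μ := by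
        simp_rw [hsup]
        exact lintegral_iSup (fun n => (hf.min measurable_const).ennreal_ofReal)
          fun m n hmn ω => ENNReal.ofReal_le_ofReal (min_le_min_left _ (Nat.cast_le.2 hmn))
    _ ≤ ENNReal.ofReal C := iSup_le fun n => by
        have hint : Integrable (fun ω => min (f ω) n) μ :=
          Integrable.of_bound (hf.min measurable_const).aestronglyMeasurable n
            (ae_of_all _ fun ω => by
              rw [Real.norm_of_nonneg (hmin_nonneg n ω)]; exact min_le_right _ _)
        rw [← ofReal_integral_eq_lintegral_ofReal hint (ae_of_all _ (hmin_nonneg n))]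
        exact ENNReal.ofReal_le_ofReal (hC n)
    _ < ∞ := ENNReal.ofReal_lt_top

variable {α β : ℝ}

lemma integral_teamCost_const [IsProbabilityMeasure μ] {u w : Ω → ℝ}
    (hm : AEStronglyMeasurable (fun ω => u ω - w ω) μ)
    (h2 : Integrable (fun ω => (u ω - w ω) ^ 2) μ) (t : ℝ) :
    ∫ ω, teamCost α β (w ω) t (u ω) ∂μ
      = (α - 1) * t ^ 2 + 2 * t * (∫ ω, (u ω - w ω) ∂μ)
        + (β - 1) * (∫ ω, (u ω - w ω) ^ 2 ∂μ) := by
  have h1 : Integrable (fun ω => u ω - w ω) μ :=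
    ((memLp_two_iff_integrable_sq hm).2 h2).integrable one_le_two
  have hlin : Integrable (fun ω => (α - 1) * t ^ 2 + 2 * t * (u ω - w ω)) μ :=
    (integrable_const _).add (h1.const_mul _)
  simp_rw [teamCost_eq]
  rw [integral_add hlin (h2.const_mul _), integral_add (integrable_const _) (h1.const_mul _),
    integral_const, integral_const_mul, integral_const_mul]
  simp

lemma integrable_sq_of_integrable_teamCost (hβ : 1 < β) {g u w : Ω → ℝ}
    (hm : AEStronglyMeasurable (fun ω => u ω - w ω) μ)
    (hc : Integrable (fun ω => teamCost α β (w ω) (g ω) (u ω)) μ)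
    (hg : Integrable (fun ω => g ω ^ 2) μ) :
    Integrable (fun ω => (u ω - w ω) ^ 2) μ := by
  have hk : 0 < β - 1 := sub_pos.2 hβ
  refine (((hc.sub (hg.const_mul (α - 1))).const_mul (2 / (β - 1))).add
    (hg.const_mul (4 / (β - 1) ^ 2))).mono' (hm.pow 2) (ae_of_all _ fun ω => ?_)
  have hsq : 0 ≤ ((β - 1) * (u ω - w ω) + 2 * g ω) ^ 2 / (β - 1) ^ 2 := by positivity
  rw [Real.norm_of_nonneg (sq_nonneg _)]
  simp only [Pi.add_apply, Pi.sub_apply, teamCost_eq]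
  field_simp at hsq ⊢
  nlinarith [hsq]

lemma integrable_sq_of_forall_le_integral_teamCost [IsFiniteMeasure μ] (hα : α < 1)
    (hβ : 1 < β) {g w : Ω → ℝ} (hg : Measurable g) {C : ℝ}
    (hC : ∀ v : ℝ → ℝ, Measurable v → C ≤ ∫ ω, teamCost α β (w ω) (g ω) (w ω + v (g ω)) ∂μ) :
    Integrable (fun ω => g ω ^ 2) μ := by
  set a := 1 / (β - 1) + 1 - α
  have ha : 0 < a := by
    have : 0 < 1 / (β - 1) := one_div_pos.2 (sub_pos.2 hβ)
    linarith
  let v (n : ℕ) (x : ℝ) : ℝ := -x / (β - 1) + √(max (a * x ^ 2 - n) 0 / (β - 1))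
  have hv (n : ℕ) (ω : Ω) :
      teamCost α β (w ω) (g ω) (w ω + v n (g ω)) = -min (a * g ω ^ 2) n := by
    rw [teamCost_add_sqrt hβ _ _ (le_max_right _ _)]
    rcases le_total (a * g ω ^ 2) n with h | h
    · rw [max_eq_right (by linarith), min_eq_left h]; ring
    · rw [max_eq_left (by linarith), min_eq_right h]; ring
  have hint : Integrable (fun ω => a * g ω ^ 2) μ := by
    refine integrable_of_forall_integral_min_le (by fun_prop) (fun ω => by positivity)
      (C := -C) fun n => ?_
    have := hC (v n) (by fun_prop)
    simp only [hv, integral_neg] at this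
    linarith
  exact (integrable_const_mul_iff (isUnit_iff_ne_zero.2 ha.ne') _).1 hint

end Integrals

theorem prop51_instance_control_sharing_vs_static_general
    {Ω : Type*} [MeasurableSpace Ω] (P : Measure Ω) [IsProbabilityMeasure P]
    (ω₁ ω₂ : Ω → ℝ) (hω₁ : Measurable ω₁) (hω₂ : Measurable ω₂)
    (α β : ℝ) (hα : α ∈ Set.Ioo (0 : ℝ) 1) (hβ : 1 < β)
    (c : ℝ → ℝ → ℝ → ℝ)
    (hc : ∀ w u₁ u₂, c w u₁ u₂
      = α * u₁ ^ 2 + β * (u₂ - w) ^ 2 - (u₁ - u₂ + w) ^ 2)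
    (JCS : (ℝ → ℝ) → (ℝ × ℝ × ℝ → ℝ) → ℝ≥0∞)
    (hJCS : ∀ γ₁ δ₂cs, JCS γ₁ δ₂cs
      = ∫⁻ ω, ENNReal.ofReal
          (c (ω₂ ω) (γ₁ (ω₁ ω)) (δ₂cs (ω₁ ω, γ₁ (ω₁ ω), ω₂ ω))) ∂P)
    (JS : (ℝ → ℝ) → (ℝ × ℝ → ℝ) → ℝ)
    (hJS : ∀ γ₁ δ₂, JS γ₁ δ₂
      = ∫ ω, c (ω₂ ω) (γ₁ (ω₁ ω)) (δ₂ (ω₁ ω, ω₂ ω)) ∂P) :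
    -- (a): person-by-person optimality of (0, (y,u,s) ↦ s + u) for (P^{CS})
    (JCS (fun _ => 0) (fun q => q.2.2 + q.2.1) = 0)
    ∧ (∀ γ₁ : ℝ → ℝ, Measurable γ₁ →
        (∀ ω, c (ω₂ ω) (γ₁ (ω₁ ω)) (ω₂ ω + γ₁ (ω₁ ω))
          = (α + β) * (γ₁ (ω₁ ω)) ^ 2)
        ∧ JCS (fun _ => 0) (fun q => q.2.2 + q.2.1)
            ≤ JCS γ₁ (fun q => q.2.2 + q.2.1))
    ∧ (∀ βhat : ℝ × ℝ × ℝ → ℝ, Measurable βhat →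
        (∀ ω, c (ω₂ ω) 0 (βhat (ω₁ ω, 0, ω₂ ω))
          = (β - 1) * (βhat (ω₁ ω, 0, ω₂ ω) - ω₂ ω) ^ 2)
        ∧ JCS (fun _ => 0) (fun q => q.2.2 + q.2.1) ≤ JCS (fun _ => 0) βhat)
    -- (b): for the static reduction the DM1 infimum is −∞
    ∧ (∀ δ₂ : ℝ × ℝ → ℝ, Measurable δ₂ →
        Integrable (fun ω => (δ₂ (ω₁ ω, ω₂ ω) - ω₂ ω) ^ 2) P →
        (∀ t : ℝ, JS (fun _ => t) δ₂
          = (α - 1) * t ^ 2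
            + 2 * t * (∫ ω, (δ₂ (ω₁ ω, ω₂ ω) - ω₂ ω) ∂P)
            + (β - 1) * (∫ ω, (δ₂ (ω₁ ω, ω₂ ω) - ω₂ ω) ^ 2 ∂P))
        ∧ (∀ M : ℝ, ∃ t : ℝ, JS (fun _ => t) δ₂ < M))
    -- no static policy with finite expected cost is person-by-person optimal for (P^S)
    ∧ (∀ (γ₁ : ℝ → ℝ) (δ₂ : ℝ × ℝ → ℝ), Measurable γ₁ → Measurable δ₂ →
        Integrable (fun ω => c (ω₂ ω) (γ₁ (ω₁ ω)) (δ₂ (ω₁ ω, ω₂ ω))) P →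
        ¬ ((∀ γ₁' : ℝ → ℝ, Measurable γ₁' → JS γ₁ δ₂ ≤ JS γ₁' δ₂)
            ∧ (∀ δ₂' : ℝ × ℝ → ℝ, Measurable δ₂' → JS γ₁ δ₂ ≤ JS γ₁ δ₂'))) := by
  have hcost : c = teamCost α β := funext fun w => funext fun u₁ => funext (hc w u₁)
  subst hcost
  have hJCS_zero : JCS (fun _ => 0) (fun q => q.2.2 + q.2.1) = 0 := by
    simp [hJCS]
  have hstatic : ∀ δ₂ : ℝ × ℝ → ℝ, Measurable δ₂ →
      Integrable (fun ω => (δ₂ (ω₁ ω, ω₂ ω) - ω₂ ω) ^ 2) P →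
      (∀ t : ℝ, JS (fun _ => t) δ₂
        = (α - 1) * t ^ 2 + 2 * t * (∫ ω, (δ₂ (ω₁ ω, ω₂ ω) - ω₂ ω) ∂P)
          + (β - 1) * (∫ ω, (δ₂ (ω₁ ω, ω₂ ω) - ω₂ ω) ^ 2 ∂P))
      ∧ (∀ M : ℝ, ∃ t : ℝ, JS (fun _ => t) δ₂ < M) := by
    intro δ₂ hδ₂ he
    have hform (t : ℝ) := (hJS (fun _ => t) δ₂).trans
      (integral_teamCost_const (by fun_prop) he t)
    refine ⟨hform, fun M => ?_⟩
    simp only [hform]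
    exact ((tendsto_quadratic_atBot (sub_neg.2 hα.2) _ _).eventually_lt_atBot M).exists
  refine ⟨hJCS_zero, fun γ₁ _ => ⟨fun ω => teamCost_add_self .., hJCS_zero ▸ zero_le⟩,
    fun βhat _ => ⟨fun ω => teamCost_zero_left .., hJCS_zero ▸ zero_le⟩, hstatic, ?_⟩
  rintro γ₁ δ₂ hγ₁ hδ₂ hint ⟨hDM1, hDM2⟩
  have hg : Integrable (fun ω => γ₁ (ω₁ ω) ^ 2) P :=
    integrable_sq_of_forall_le_integral_teamCost hα.2 hβ (hγ₁.comp hω₁) (w := ω₂)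
      fun v hv => (hDM2 (fun p => p.2 + v (γ₁ p.1)) (by fun_prop)).trans_eq (hJS _ _)
  have he := integrable_sq_of_integrable_teamCost hβ (by fun_prop) hint hg
  obtain ⟨t, ht⟩ := (hstatic δ₂ hδ₂ he).2 (JS γ₁ δ₂)
  exact (hDM1 _ measurable_const).not_gt ht

/-- **Instance of Proposition 5.1(i): a person-by-person optimal policy exists under
control sharing but not for the static reduction.** For the cost
`c (ω₂, u¹, u²) = α (u¹)² + β (u² − ω₂)² − (u¹ − u² + ω₂)²` with `α ∈ (0,1)`, `β > 1`
and `E[ω₂²] < ∞`: (a) the control-sharing policy `γ₁* ≡ 0`,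
`δ₂^{cs*} (y, u, s) = s + u` is person-by-person optimal for `(P^{CS})`; (b) for every
measurable `δ₂` with `E[(δ₂(ω₁,ω₂) − ω₂)²] < ∞` the static cost of constant DM1 policies
is `(α−1) t² + 2t E[δ₂ − ω₂] + (β−1) E[(δ₂ − ω₂)²]`, whose infimum over `t` is `−∞`;
consequently no static policy with finite expected cost is person-by-person optimal for
`(P^S)`. -/
theorem prop51_instance_control_sharing_vs_static
    {Ω : Type*} [MeasurableSpace Ω] (P : Measure Ω) [IsProbabilityMeasure P]
    (ω₁ ω₂ : Ω → ℝ) (hω₁ : Measurable ω₁) (hω₂ : Measurable ω₂)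
    (hω₂sq : Integrable (fun ω => (ω₂ ω) ^ 2) P)
    (α β : ℝ) (hα : α ∈ Set.Ioo (0 : ℝ) 1) (hβ : 1 < β)
    (c : ℝ → ℝ → ℝ → ℝ)
    (hc : ∀ w u₁ u₂, c w u₁ u₂
      = α * u₁ ^ 2 + β * (u₂ - w) ^ 2 - (u₁ - u₂ + w) ^ 2)
    (JCS : (ℝ → ℝ) → (ℝ × ℝ × ℝ → ℝ) → ℝ≥0∞)
    (hJCS : ∀ γ₁ δ₂cs, JCS γ₁ δ₂cs
      = ∫⁻ ω, ENNReal.ofReal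
          (c (ω₂ ω) (γ₁ (ω₁ ω)) (δ₂cs (ω₁ ω, γ₁ (ω₁ ω), ω₂ ω))) ∂P)
    (JS : (ℝ → ℝ) → (ℝ × ℝ → ℝ) → ℝ)
    (hJS : ∀ γ₁ δ₂, JS γ₁ δ₂
      = ∫ ω, c (ω₂ ω) (γ₁ (ω₁ ω)) (δ₂ (ω₁ ω, ω₂ ω)) ∂P) :
    -- (a): person-by-person optimality of (0, (y,u,s) ↦ s + u) for (P^{CS})
    (JCS (fun _ => 0) (fun q => q.2.2 + q.2.1) = 0)
    ∧ (∀ γ₁ : ℝ → ℝ, Measurable γ₁ →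
        (∀ ω, c (ω₂ ω) (γ₁ (ω₁ ω)) (ω₂ ω + γ₁ (ω₁ ω))
          = (α + β) * (γ₁ (ω₁ ω)) ^ 2)
        ∧ JCS (fun _ => 0) (fun q => q.2.2 + q.2.1)
            ≤ JCS γ₁ (fun q => q.2.2 + q.2.1))
    ∧ (∀ βhat : ℝ × ℝ × ℝ → ℝ, Measurable βhat →
        (∀ ω, c (ω₂ ω) 0 (βhat (ω₁ ω, 0, ω₂ ω))
          = (β - 1) * (βhat (ω₁ ω, 0, ω₂ ω) - ω₂ ω) ^ 2)
        ∧ JCS (fun _ => 0) (fun q => q.2.2 + q.2.1) ≤ JCS (fun _ => 0) βhat)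
    -- (b): for the static reduction the DM1 infimum is −∞
    ∧ (∀ δ₂ : ℝ × ℝ → ℝ, Measurable δ₂ →
        Integrable (fun ω => (δ₂ (ω₁ ω, ω₂ ω) - ω₂ ω) ^ 2) P →
        (∀ t : ℝ, JS (fun _ => t) δ₂
          = (α - 1) * t ^ 2
            + 2 * t * (∫ ω, (δ₂ (ω₁ ω, ω₂ ω) - ω₂ ω) ∂P)
            + (β - 1) * (∫ ω, (δ₂ (ω₁ ω, ω₂ ω) - ω₂ ω) ^ 2 ∂P))
        ∧ (∀ M : ℝ, ∃ t : ℝ, JS (fun _ => t) δ₂ < M))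
    -- no static policy with finite expected cost is person-by-person optimal for (P^S)
    ∧ (∀ (γ₁ : ℝ → ℝ) (δ₂ : ℝ × ℝ → ℝ), Measurable γ₁ → Measurable δ₂ →
        Integrable (fun ω => c (ω₂ ω) (γ₁ (ω₁ ω)) (δ₂ (ω₁ ω, ω₂ ω))) P →
        ¬ ((∀ γ₁' : ℝ → ℝ, Measurable γ₁' → JS γ₁ δ₂ ≤ JS γ₁' δ₂)
            ∧ (∀ δ₂' : ℝ × ℝ → ℝ, Measurable δ₂' → JS γ₁ δ₂ ≤ JS γ₁ δ₂'))) :=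
  prop51_instance_control_sharing_vs_static_general P ω₁ ω₂ hω₁ hω₂ α β hα hβ c hc JCS hJCS JS hJS
end

section
/- (Example 4.3: person-by-person optimality without stationarity in the static reduction.) Consider the cost c(ω₂, u¹, u²) = (√u¹ − u² + ω₂)² with DM1's action u¹ ∈ [0,∞). Then: (a) the static policy γ₁* ≡ 0, δ₂*(y, s) = s is person-by-person optimal for (P^S): J^S(γ₁*, δ₂*) = 0; for every measurable γ₁ : ℝ → [0,∞) the integrand of J^S(γ₁, δ₂*) equals γ₁(ω₁) pointwise, hence J^S(γ₁, δ₂*) ≥ 0; and for every measurable δ₂ : ℝ × ℝ → ℝ the integrand of J^S(γ₁*, δ₂) equals (ω₂ − δ₂(ω₁, ω₂))² pointwise, hence J^S(γ₁*, δ₂) ≥ 0. (b) Nevertheless, the DM1-reduced cost function t ↦ J^S(t, δ₂*) (constant DM1 policies) equals the identity function t ↦ t on [0,∞); in particular its derivative equals 1 at every t > 0, so the stationarity (first-order) condition for DM1 has no solution and (γ₁*, δ₂*) is not a stationary policy for (P^S). -/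
open MeasureTheory
open scoped ENNReal

/-! Against `δ₂* (y, s) = s` the second decision maker cancels the noise, so DM1's action `u`
costs `(√u)² = u`. The reduced cost of DM1 is therefore the identity on `[0,∞)`: it is minimized
at the boundary point `0`, yet its slope is `1` at every interior point. -/

theorem sq_sqrt_sub_add_cancel {u : ℝ} (hu : 0 ≤ u) (v : ℝ) : (√u - v + v) ^ 2 = u := by
  rw [sub_add_cancel, Real.sq_sqrt hu]

theorem sq_sqrt_zero_sub_add (v w : ℝ) : (√0 - v + w) ^ 2 = (w - v) ^ 2 := by
  rw [Real.sqrt_zero]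
  ring

theorem hasDerivAt_one_of_eq_self_of_le {g : ℝ → ℝ} {a t : ℝ} (hg : ∀ s, a ≤ s → g s = s)
    (ht : a < t) : HasDerivAt g 1 t :=
  (hasDerivAt_id t).congr_of_eventuallyEq <| (eventually_gt_nhds ht).mono fun s hs => hg s hs.le

theorem example43_pbp_without_stationarity_general
    {Ω : Type*} [MeasurableSpace Ω] (P : Measure Ω) [IsProbabilityMeasure P]
    (ω₁ ω₂ : Ω → ℝ)
    (c : ℝ → ℝ → ℝ → ℝ)
    (hc : ∀ w u₁ u₂, c w u₁ u₂ = (Real.sqrt u₁ - u₂ + w) ^ 2)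
    (JS : (ℝ → ℝ) → (ℝ × ℝ → ℝ) → ℝ≥0∞)
    (hJS : ∀ γ₁ δ₂, JS γ₁ δ₂
      = ∫⁻ ω, ENNReal.ofReal (c (ω₂ ω) (γ₁ (ω₁ ω)) (δ₂ (ω₁ ω, ω₂ ω))) ∂P) :
    -- (a): person-by-person optimality
    (JS (fun _ => 0) (fun p => p.2) = 0)
    ∧ (∀ γ₁ : ℝ → ℝ, Measurable γ₁ → (∀ x, 0 ≤ γ₁ x) →
        (∀ ω, c (ω₂ ω) (γ₁ (ω₁ ω)) (ω₂ ω) = γ₁ (ω₁ ω))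
        ∧ JS (fun _ => 0) (fun p => p.2) ≤ JS γ₁ (fun p => p.2))
    ∧ (∀ δ₂ : ℝ × ℝ → ℝ, Measurable δ₂ →
        (∀ ω, c (ω₂ ω) 0 (δ₂ (ω₁ ω, ω₂ ω)) = (ω₂ ω - δ₂ (ω₁ ω, ω₂ ω)) ^ 2)
        ∧ JS (fun _ => 0) (fun p => p.2) ≤ JS (fun _ => 0) δ₂)
    -- (b): the DM1-reduced cost is the identity on [0,∞) and is never stationary
    ∧ (∀ t : ℝ, 0 ≤ t → (JS (fun _ => t) (fun p => p.2)).toReal = t)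
    ∧ (∀ t : ℝ, 0 < t →
        HasDerivAt (fun s : ℝ => (JS (fun _ => s) (fun p => p.2)).toReal) 1 t)
    ∧ ¬ ∃ t : ℝ, 0 < t ∧
        deriv (fun s : ℝ => (JS (fun _ => s) (fun p => p.2)).toReal) t = 0 := by
  have reduced : ∀ s, 0 ≤ s → JS (fun _ => s) (fun p => p.2) = ENNReal.ofReal s := fun s hs => by
    simp only [hJS, hc, sq_sqrt_sub_add_cancel hs, lintegral_const, measure_univ, mul_one]
  have reduced_toReal : ∀ s, 0 ≤ s → (JS (fun _ => s) (fun p => p.2)).toReal = s :=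
    fun s hs => by rw [reduced s hs, ENNReal.toReal_ofReal hs]
  have optimal : JS (fun _ => 0) (fun p => p.2) = 0 := by
    rw [reduced 0 le_rfl, ENNReal.ofReal_zero]
  have slope : ∀ t : ℝ, 0 < t →
      HasDerivAt (fun s : ℝ => (JS (fun _ => s) (fun p => p.2)).toReal) 1 t :=
    fun t ht => hasDerivAt_one_of_eq_self_of_le reduced_toReal ht
  refine ⟨optimal,
    fun γ₁ _ hγ₁ => ⟨fun ω => by rw [hc, sq_sqrt_sub_add_cancel (hγ₁ _)], optimal ▸ zero_le⟩,
    fun δ₂ _ => ⟨fun ω => by rw [hc, sq_sqrt_zero_sub_add], optimal ▸ zero_le⟩,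
    reduced_toReal, slope, ?_⟩
  rintro ⟨t, ht, hstat⟩
  exact one_ne_zero ((slope t ht).deriv.symm.trans hstat)

/-- **Example 4.3: person-by-person optimality without stationarity in the static
reduction.** For the cost `c (ω₂, u¹, u²) = (√u¹ − u² + ω₂)²` with DM1's action in
`[0,∞)`: (a) the static policy `γ₁* ≡ 0`, `δ₂* (y, s) = s` is person-by-person optimal
for `(P^S)`; (b) nevertheless the DM1-reduced cost `t ↦ J^S(t, δ₂*)` equals the identity
on `[0,∞)`, its derivative is `1` at every `t > 0`, and hence the first-order
(stationarity) condition for DM1 has no solution. -/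
theorem example43_pbp_without_stationarity
    {Ω : Type*} [MeasurableSpace Ω] (P : Measure Ω) [IsProbabilityMeasure P]
    (ω₁ ω₂ : Ω → ℝ) (hω₁ : Measurable ω₁) (hω₂ : Measurable ω₂)
    (c : ℝ → ℝ → ℝ → ℝ)
    (hc : ∀ w u₁ u₂, c w u₁ u₂ = (Real.sqrt u₁ - u₂ + w) ^ 2)
    (JS : (ℝ → ℝ) → (ℝ × ℝ → ℝ) → ℝ≥0∞)
    (hJS : ∀ γ₁ δ₂, JS γ₁ δ₂
      = ∫⁻ ω, ENNReal.ofReal (c (ω₂ ω) (γ₁ (ω₁ ω)) (δ₂ (ω₁ ω, ω₂ ω))) ∂P) :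
    -- (a): person-by-person optimality
    (JS (fun _ => 0) (fun p => p.2) = 0)
    ∧ (∀ γ₁ : ℝ → ℝ, Measurable γ₁ → (∀ x, 0 ≤ γ₁ x) →
        (∀ ω, c (ω₂ ω) (γ₁ (ω₁ ω)) (ω₂ ω) = γ₁ (ω₁ ω))
        ∧ JS (fun _ => 0) (fun p => p.2) ≤ JS γ₁ (fun p => p.2))
    ∧ (∀ δ₂ : ℝ × ℝ → ℝ, Measurable δ₂ →
        (∀ ω, c (ω₂ ω) 0 (δ₂ (ω₁ ω, ω₂ ω)) = (ω₂ ω - δ₂ (ω₁ ω, ω₂ ω)) ^ 2)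
        ∧ JS (fun _ => 0) (fun p => p.2) ≤ JS (fun _ => 0) δ₂)
    -- (b): the DM1-reduced cost is the identity on [0,∞) and is never stationary
    ∧ (∀ t : ℝ, 0 ≤ t → (JS (fun _ => t) (fun p => p.2)).toReal = t)
    ∧ (∀ t : ℝ, 0 < t →
        HasDerivAt (fun s : ℝ => (JS (fun _ => s) (fun p => p.2)).toReal) 1 t)
    ∧ ¬ ∃ t : ℝ, 0 < t ∧
        deriv (fun s : ℝ => (JS (fun _ => s) (fun p => p.2)).toReal) t = 0 :=
  example43_pbp_without_stationarity_general P ω₁ ω₂ c hc JS hJS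
end

section
/- (Instance of Proposition 5.2(ii): essential uniqueness of globally optimal policies transfers from the static reduction to the dynamic team.) Suppose the static policy (γ₁*, δ₂*) is globally optimal for J^S and is essentially unique: every globally optimal static policy (γ₁, δ₂) satisfies γ₁(y₁(ω)) = γ₁*(y₁(ω)) for P-a.e. ω and δ₂(y₁(ω), ŷ₂(ω)) = δ₂*(y₁(ω), ŷ₂(ω)) for P-a.e. ω. Then the dynamic policy (γ₁*, γ₂*), where γ₂*(y, t) := δ₂*(y, g⁻(t, γ₁*(y))), is globally optimal for J^D, and it is essentially unique in the sense that every globally optimal dynamic policy (γ₁, γ₂) satisfies γ₁(y₁(ω)) = γ₁*(y₁(ω)) for P-a.e. ω and γ₂(y₁(ω), g(ŷ₂(ω), γ₁*(y₁(ω)))) = γ₂*(y₁(ω), g(ŷ₂(ω), γ₁*(y₁(ω)))) for P-a.e. ω. -/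
/-!
For a fixed first-stage policy `γ₁`, composing a dynamic second-stage policy `γ₂ (y, t)` with
`t = g (s, γ₁ y)` gives a static policy with the same cost, and since `ginv` undoes `g`, every
static policy `δ₂` arises this way from `(y, t) ↦ δ₂ (y, ginv (t, γ₁ y))`. Hence a dynamic policy
is globally optimal exactly when its static image is, and almost-everywhere uniqueness transfers
back through the same substitution.
-/

open MeasureTheory
open scoped ENNReal

namespace TeamPolicy

variable {Y₁ Yh Yh' U₁ U₂ : Type*}

def staticOfDynamic (g : Yh × U₁ → Yh') (γ₁ : Y₁ → U₁) (γ₂ : Y₁ × Yh' → U₂) :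
    Y₁ × Yh → U₂ :=
  fun p => γ₂ (p.1, g (p.2, γ₁ p.1))

def dynamicOfStatic (ginv : Yh' × U₁ → Yh) (γ₁ : Y₁ → U₁) (δ₂ : Y₁ × Yh → U₂) :
    Y₁ × Yh' → U₂ :=
  fun p => δ₂ (p.1, ginv (p.2, γ₁ p.1))

theorem staticOfDynamic_dynamicOfStatic {g : Yh × U₁ → Yh'} {ginv : Yh' × U₁ → Yh}
    (hgl : ∀ s u, ginv (g (s, u), u) = s) (γ₁ : Y₁ → U₁) (δ₂ : Y₁ × Yh → U₂) :
    staticOfDynamic g γ₁ (dynamicOfStatic ginv γ₁ δ₂) = δ₂ := by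
  funext p
  simp [staticOfDynamic, dynamicOfStatic, hgl]

variable [MeasurableSpace Y₁] [MeasurableSpace Yh] [MeasurableSpace Yh'] [MeasurableSpace U₁]
  [MeasurableSpace U₂]

theorem measurable_staticOfDynamic {g : Yh × U₁ → Yh'} (hg : Measurable g) {γ₁ : Y₁ → U₁}
    {γ₂ : Y₁ × Yh' → U₂} (hγ₁ : Measurable γ₁) (hγ₂ : Measurable γ₂) :
    Measurable (staticOfDynamic g γ₁ γ₂) :=
  hγ₂.comp (measurable_fst.prodMk (hg.comp (measurable_snd.prodMk (hγ₁.comp measurable_fst))))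

theorem measurable_dynamicOfStatic {ginv : Yh' × U₁ → Yh} (hginv : Measurable ginv)
    {γ₁ : Y₁ → U₁} {δ₂ : Y₁ × Yh → U₂} (hγ₁ : Measurable γ₁) (hδ₂ : Measurable δ₂) :
    Measurable (dynamicOfStatic ginv γ₁ δ₂) :=
  hδ₂.comp (measurable_fst.prodMk (hginv.comp (measurable_snd.prodMk (hγ₁.comp measurable_fst))))

def IsGloballyOptimal {Y₂ : Type*} [MeasurableSpace Y₂] (J : (Y₁ → U₁) → (Y₁ × Y₂ → U₂) → ℝ≥0∞)
    (γ₁ : Y₁ → U₁) (γ₂ : Y₁ × Y₂ → U₂) : Prop :=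
  ∀ (γ₁' : Y₁ → U₁) (γ₂' : Y₁ × Y₂ → U₂), Measurable γ₁' → Measurable γ₂' → J γ₁ γ₂ ≤ J γ₁' γ₂'

theorem isGloballyOptimal_dynamic_iff_static {g : Yh × U₁ → Yh'} {ginv : Yh' × U₁ → Yh}
    (hg : Measurable g) (hginv : Measurable ginv) (hgl : ∀ s u, ginv (g (s, u), u) = s)
    {JD : (Y₁ → U₁) → (Y₁ × Yh' → U₂) → ℝ≥0∞} {JS : (Y₁ → U₁) → (Y₁ × Yh → U₂) → ℝ≥0∞}
    (hJ : ∀ γ₁ γ₂, JD γ₁ γ₂ = JS γ₁ (staticOfDynamic g γ₁ γ₂)) (γ₁ : Y₁ → U₁)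
    (γ₂ : Y₁ × Yh' → U₂) :
    IsGloballyOptimal JD γ₁ γ₂ ↔ IsGloballyOptimal JS γ₁ (staticOfDynamic g γ₁ γ₂) := by
  constructor
  · intro hD γ₁' δ₂' hγ₁' hδ₂'
    calc JS γ₁ (staticOfDynamic g γ₁ γ₂) = JD γ₁ γ₂ := (hJ γ₁ γ₂).symm
      _ ≤ JD γ₁' (dynamicOfStatic ginv γ₁' δ₂') :=
        hD _ _ hγ₁' (measurable_dynamicOfStatic hginv hγ₁' hδ₂')
      _ = JS γ₁' δ₂' := by rw [hJ, staticOfDynamic_dynamicOfStatic hgl]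
  · intro hS γ₁' γ₂' hγ₁' hγ₂'
    rw [hJ, hJ]
    exact hS _ _ hγ₁' (measurable_staticOfDynamic hg hγ₁' hγ₂')

end TeamPolicy

open TeamPolicy

theorem essential_uniqueness_transfers_static_to_dynamic_general
    {Ω Ω₀ Y₁ Yh Yh' U₁ U₂ : Type*}
    [MeasurableSpace Ω] [MeasurableSpace Y₁]
    [MeasurableSpace Yh] [MeasurableSpace Yh'] [MeasurableSpace U₁] [MeasurableSpace U₂]
    (P : Measure Ω)
    (ω₀ : Ω → Ω₀) (y₁ : Ω → Y₁) (yhat₂ : Ω → Yh)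
    (g : Yh × U₁ → Yh') (ginv : Yh' × U₁ → Yh)
    (hg : Measurable g) (hginv : Measurable ginv)
    (hgl : ∀ (s : Yh) (u : U₁), ginv (g (s, u), u) = s)
    (c : Ω₀ × U₁ × U₂ → ℝ≥0∞)
    (JD : (Y₁ → U₁) → (Y₁ × Yh' → U₂) → ℝ≥0∞)
    (JS : (Y₁ → U₁) → (Y₁ × Yh → U₂) → ℝ≥0∞)
    (hJD : ∀ γ₁ γ₂, JD γ₁ γ₂
      = ∫⁻ ω, c (ω₀ ω, γ₁ (y₁ ω), γ₂ (y₁ ω, g (yhat₂ ω, γ₁ (y₁ ω)))) ∂P)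
    (hJS : ∀ γ₁ δ₂, JS γ₁ δ₂
      = ∫⁻ ω, c (ω₀ ω, γ₁ (y₁ ω), δ₂ (y₁ ω, yhat₂ ω)) ∂P)
    (γ₁s : Y₁ → U₁) (δ₂s : Y₁ × Yh → U₂)
    -- global optimality of (γ₁s, δ₂s) for the static reduction
    (hopt : ∀ (γ₁ : Y₁ → U₁) (δ₂ : Y₁ × Yh → U₂), Measurable γ₁ → Measurable δ₂ →
      JS γ₁s δ₂s ≤ JS γ₁ δ₂)
    -- essential uniqueness of (γ₁s, δ₂s) among globally optimal static policies
    (huniq : ∀ (γ₁ : Y₁ → U₁) (δ₂ : Y₁ × Yh → U₂), Measurable γ₁ → Measurable δ₂ →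
      (∀ (γ₁' : Y₁ → U₁) (δ₂' : Y₁ × Yh → U₂), Measurable γ₁' → Measurable δ₂' →
        JS γ₁ δ₂ ≤ JS γ₁' δ₂') →
      (∀ᵐ ω ∂P, γ₁ (y₁ ω) = γ₁s (y₁ ω))
        ∧ (∀ᵐ ω ∂P, δ₂ (y₁ ω, yhat₂ ω) = δ₂s (y₁ ω, yhat₂ ω))) :
    -- the corresponding dynamic policy is globally optimal for JD ...
    (∀ (γ₁ : Y₁ → U₁) (γ₂ : Y₁ × Yh' → U₂), Measurable γ₁ → Measurable γ₂ →
      JD γ₁s (fun p => δ₂s (p.1, ginv (p.2, γ₁s p.1))) ≤ JD γ₁ γ₂)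
    -- ... and is essentially unique among globally optimal dynamic policies
    ∧ (∀ (γ₁ : Y₁ → U₁) (γ₂ : Y₁ × Yh' → U₂), Measurable γ₁ → Measurable γ₂ →
        (∀ (γ₁' : Y₁ → U₁) (γ₂' : Y₁ × Yh' → U₂), Measurable γ₁' → Measurable γ₂' →
          JD γ₁ γ₂ ≤ JD γ₁' γ₂') →
        (∀ᵐ ω ∂P, γ₁ (y₁ ω) = γ₁s (y₁ ω))
          ∧ (∀ᵐ ω ∂P, γ₂ (y₁ ω, g (yhat₂ ω, γ₁s (y₁ ω)))
              = (fun p => δ₂s (p.1, ginv (p.2, γ₁s p.1)))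
                  (y₁ ω, g (yhat₂ ω, γ₁s (y₁ ω))))) := by
  have hJ : ∀ γ₁ γ₂, JD γ₁ γ₂ = JS γ₁ (staticOfDynamic g γ₁ γ₂) := fun _ _ => by
    rw [hJD, hJS]; rfl
  have hopt_iff := isGloballyOptimal_dynamic_iff_static hg hginv hgl hJ
  refine ⟨?_, fun γ₁ γ₂ hγ₁ hγ₂ hDopt => ?_⟩
  · refine (hopt_iff γ₁s (dynamicOfStatic ginv γ₁s δ₂s)).2 ?_
    rwa [staticOfDynamic_dynamicOfStatic hgl]
  obtain ⟨hγ₁_ae, hδ₂_ae⟩ := huniq γ₁ _ hγ₁ (measurable_staticOfDynamic hg hγ₁ hγ₂)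
    ((hopt_iff γ₁ γ₂).1 hDopt)
  refine ⟨hγ₁_ae, ?_⟩
  filter_upwards [hγ₁_ae, hδ₂_ae] with ω hγ₁ω hδ₂ω
  rw [hgl, ← hδ₂ω, staticOfDynamic, hγ₁ω]

/-- **Instance of Proposition 5.2(ii): essential uniqueness of globally optimal policies
transfers from the static reduction to the dynamic team.** If `(γ₁s, δ₂s)` is globally
optimal for `JS` and essentially unique, then the dynamic policy
`(γ₁s, (y, t) ↦ δ₂s (y, ginv (t, γ₁s y)))` is globally optimal for `JD` and is
essentially unique among globally optimal dynamic policies. -/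
theorem essential_uniqueness_transfers_static_to_dynamic
    {Ω Ω₀ Y₁ Yh Yh' U₁ U₂ : Type*}
    [MeasurableSpace Ω] [MeasurableSpace Ω₀] [MeasurableSpace Y₁]
    [MeasurableSpace Yh] [MeasurableSpace Yh'] [MeasurableSpace U₁] [MeasurableSpace U₂]
    (P : Measure Ω) [IsProbabilityMeasure P]
    (ω₀ : Ω → Ω₀) (y₁ : Ω → Y₁) (yhat₂ : Ω → Yh)
    (hω₀ : Measurable ω₀) (hy₁ : Measurable y₁) (hyhat₂ : Measurable yhat₂)
    (g : Yh × U₁ → Yh') (ginv : Yh' × U₁ → Yh)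
    (hg : Measurable g) (hginv : Measurable ginv)
    (hgl : ∀ (s : Yh) (u : U₁), ginv (g (s, u), u) = s)
    (hgr : ∀ (t : Yh') (u : U₁), g (ginv (t, u), u) = t)
    (c : Ω₀ × U₁ × U₂ → ℝ≥0∞) (hc : Measurable c)
    (JD : (Y₁ → U₁) → (Y₁ × Yh' → U₂) → ℝ≥0∞)
    (JS : (Y₁ → U₁) → (Y₁ × Yh → U₂) → ℝ≥0∞)
    (hJD : ∀ γ₁ γ₂, JD γ₁ γ₂
      = ∫⁻ ω, c (ω₀ ω, γ₁ (y₁ ω), γ₂ (y₁ ω, g (yhat₂ ω, γ₁ (y₁ ω)))) ∂P)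
    (hJS : ∀ γ₁ δ₂, JS γ₁ δ₂
      = ∫⁻ ω, c (ω₀ ω, γ₁ (y₁ ω), δ₂ (y₁ ω, yhat₂ ω)) ∂P)
    (γ₁s : Y₁ → U₁) (δ₂s : Y₁ × Yh → U₂)
    (hγ₁s : Measurable γ₁s) (hδ₂s : Measurable δ₂s)
    -- global optimality of (γ₁s, δ₂s) for the static reduction
    (hopt : ∀ (γ₁ : Y₁ → U₁) (δ₂ : Y₁ × Yh → U₂), Measurable γ₁ → Measurable δ₂ →
      JS γ₁s δ₂s ≤ JS γ₁ δ₂)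
    -- essential uniqueness of (γ₁s, δ₂s) among globally optimal static policies
    (huniq : ∀ (γ₁ : Y₁ → U₁) (δ₂ : Y₁ × Yh → U₂), Measurable γ₁ → Measurable δ₂ →
      (∀ (γ₁' : Y₁ → U₁) (δ₂' : Y₁ × Yh → U₂), Measurable γ₁' → Measurable δ₂' →
        JS γ₁ δ₂ ≤ JS γ₁' δ₂') →
      (∀ᵐ ω ∂P, γ₁ (y₁ ω) = γ₁s (y₁ ω))
        ∧ (∀ᵐ ω ∂P, δ₂ (y₁ ω, yhat₂ ω) = δ₂s (y₁ ω, yhat₂ ω))) :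
    -- the corresponding dynamic policy is globally optimal for JD ...
    (∀ (γ₁ : Y₁ → U₁) (γ₂ : Y₁ × Yh' → U₂), Measurable γ₁ → Measurable γ₂ →
      JD γ₁s (fun p => δ₂s (p.1, ginv (p.2, γ₁s p.1))) ≤ JD γ₁ γ₂)
    -- ... and is essentially unique among globally optimal dynamic policies
    ∧ (∀ (γ₁ : Y₁ → U₁) (γ₂ : Y₁ × Yh' → U₂), Measurable γ₁ → Measurable γ₂ →
        (∀ (γ₁' : Y₁ → U₁) (γ₂' : Y₁ × Yh' → U₂), Measurable γ₁' → Measurable γ₂' →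
          JD γ₁ γ₂ ≤ JD γ₁' γ₂') →
        (∀ᵐ ω ∂P, γ₁ (y₁ ω) = γ₁s (y₁ ω))
          ∧ (∀ᵐ ω ∂P, γ₂ (y₁ ω, g (yhat₂ ω, γ₁s (y₁ ω)))
              = (fun p => δ₂s (p.1, ginv (p.2, γ₁s p.1)))
                  (y₁ ω, g (yhat₂ ω, γ₁s (y₁ ω))))) :=
  essential_uniqueness_transfers_static_to_dynamic_general P ω₀ y₁ yhat₂ g ginv hg hginv hgl c JD JS
    hJD hJS γ₁s δ₂s hopt huniq
end

section
/- (Corollary 5.1(i), two decision makers: global optimality is equivalent across the control-sharing, static, and dynamic formulations.) Let (γ₁*, δ̃₂*) be a control-sharing static policy, and define δ₂*(y, s) := δ̃₂*(y, γ₁*(y), s) and γ₂*(y, t) := δ₂*(y, g⁻(t, γ₁*(y))). Then the following are equivalent: (a) (γ₁*, δ̃₂*) is globally optimal for J^{CS} (i.e., J^{CS}(γ₁*, δ̃₂*) ≤ J^{CS}(γ₁, δ₂^{cs}) for all measurable γ₁ : Y₁ → U₁ and δ₂^{cs} : Y₁ × U₁ × Ŷ → U₂); (b) (γ₁*, δ₂*)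 is globally optimal for J^S; (c) (γ₁*, γ₂*) is globally optimal for J^D. Moreover J^{CS}(γ₁*, δ̃₂*) = J^S(γ₁*, δ₂*) = J^D(γ₁*, γ₂*). -/
/-!
For a fixed first-stage policy, second-stage policies of the three kinds can be converted
into one another without changing the cost: a control-sharing policy evaluated at `γ₁ y` is a
static one, a static policy is a control-sharing one that ignores the control, and since
`s ↦ g (s, u)` is invertible with inverse `t ↦ ginv (t, u)`, static and dynamic policies
correspond through `g` and `ginv`. All conversions preserve measurability, so the three
formulations attain the same costs and have the same lower bounds.
-/

open MeasureTheory
open scoped ENNReal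

theorem forall_le_iff_of_cost_preserving {A B B' M : Type*} [LE M]
    {p : A → Prop} {q : B → Prop} {q' : B' → Prop} {J : A → B → M} {J' : A → B' → M}
    (f : A → B → B') (hf : ∀ a b, p a → q b → q' (f a b)) (hJf : ∀ a b, J' a (f a b) = J a b)
    (h : A → B' → B) (hh : ∀ a b', p a → q' b' → q (h a b')) (hJh : ∀ a b', J a (h a b') = J' a b')
    (x : M) :
    (∀ a b, p a → q b → x ≤ J a b) ↔ (∀ a b', p a → q' b' → x ≤ J' a b') :=
  ⟨fun H a b' ha hb' => hJh a b' ▸ H a _ ha (hh a b' ha hb'),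
    fun H a b ha hb => hJf a b ▸ H a _ ha (hf a b ha hb)⟩

theorem corollary51_global_optimality_equivalences_general
    {Ω Ω₀ Y₁ Yh Yh' U₁ U₂ : Type*}
    [MeasurableSpace Ω] [MeasurableSpace Y₁]
    [MeasurableSpace Yh] [MeasurableSpace Yh'] [MeasurableSpace U₁] [MeasurableSpace U₂]
    (P : Measure Ω)
    (ω₀ : Ω → Ω₀) (y₁ : Ω → Y₁) (yhat₂ : Ω → Yh)
    (g : Yh × U₁ → Yh') (ginv : Yh' × U₁ → Yh)
    (hg : Measurable g) (hginv : Measurable ginv)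
    (hgl : ∀ (s : Yh) (u : U₁), ginv (g (s, u), u) = s)
    (c : Ω₀ × U₁ × U₂ → ℝ≥0∞)
    (JD : (Y₁ → U₁) → (Y₁ × Yh' → U₂) → ℝ≥0∞)
    (JS : (Y₁ → U₁) → (Y₁ × Yh → U₂) → ℝ≥0∞)
    (JCS : (Y₁ → U₁) → (Y₁ × U₁ × Yh → U₂) → ℝ≥0∞)
    (hJD : ∀ γ₁ γ₂, JD γ₁ γ₂
      = ∫⁻ ω, c (ω₀ ω, γ₁ (y₁ ω), γ₂ (y₁ ω, g (yhat₂ ω, γ₁ (y₁ ω)))) ∂P)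
    (hJS : ∀ γ₁ δ₂, JS γ₁ δ₂
      = ∫⁻ ω, c (ω₀ ω, γ₁ (y₁ ω), δ₂ (y₁ ω, yhat₂ ω)) ∂P)
    (hJCS : ∀ γ₁ δ₂cs, JCS γ₁ δ₂cs
      = ∫⁻ ω, c (ω₀ ω, γ₁ (y₁ ω), δ₂cs (y₁ ω, γ₁ (y₁ ω), yhat₂ ω)) ∂P)
    (γ₁s : Y₁ → U₁) (δ₂cs : Y₁ × U₁ × Yh → U₂) :
    -- (a) ↔ (b)
    ((∀ (γ₁ : Y₁ → U₁) (β : Y₁ × U₁ × Yh → U₂), Measurable γ₁ → Measurable β →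
        JCS γ₁s δ₂cs ≤ JCS γ₁ β)
      ↔ (∀ (γ₁ : Y₁ → U₁) (δ₂ : Y₁ × Yh → U₂), Measurable γ₁ → Measurable δ₂ →
          JS γ₁s (fun p => δ₂cs (p.1, γ₁s p.1, p.2)) ≤ JS γ₁ δ₂))
    -- (b) ↔ (c)
    ∧ ((∀ (γ₁ : Y₁ → U₁) (δ₂ : Y₁ × Yh → U₂), Measurable γ₁ → Measurable δ₂ →
          JS γ₁s (fun p => δ₂cs (p.1, γ₁s p.1, p.2)) ≤ JS γ₁ δ₂)
      ↔ (∀ (γ₁ : Y₁ → U₁) (γ₂ : Y₁ × Yh' → U₂), Measurable γ₁ → Measurable γ₂ →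
          JD γ₁s (fun p => δ₂cs (p.1, γ₁s p.1, ginv (p.2, γ₁s p.1))) ≤ JD γ₁ γ₂))
    -- the three expected costs coincide
    ∧ JCS γ₁s δ₂cs = JS γ₁s (fun p => δ₂cs (p.1, γ₁s p.1, p.2))
    ∧ JS γ₁s (fun p => δ₂cs (p.1, γ₁s p.1, p.2))
        = JD γ₁s (fun p => δ₂cs (p.1, γ₁s p.1, ginv (p.2, γ₁s p.1))) := by
  have controlSharing_eq_static : ∀ γ₁ β, JCS γ₁ β = JS γ₁ (fun p => β (p.1, γ₁ p.1, p.2)) := by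
    intro γ₁ β; rw [hJCS, hJS]
  have static_eq_controlSharing : ∀ γ₁ δ₂, JS γ₁ δ₂ = JCS γ₁ (fun p => δ₂ (p.1, p.2.2)) := by
    intro γ₁ δ₂; rw [hJCS, hJS]
  have dynamic_eq_static : ∀ γ₁ γ₂, JD γ₁ γ₂ = JS γ₁ (fun p => γ₂ (p.1, g (p.2, γ₁ p.1))) := by
    intro γ₁ γ₂; rw [hJD, hJS]
  have static_eq_dynamic :
      ∀ γ₁ δ₂, JS γ₁ δ₂ = JD γ₁ (fun p => δ₂ (p.1, ginv (p.2, γ₁ p.1))) := by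
    intro γ₁ δ₂; simp only [hJS, hJD, hgl]
  refine ⟨?_, ?_, controlSharing_eq_static _ _, static_eq_dynamic _ _⟩
  · rw [controlSharing_eq_static]
    exact forall_le_iff_of_cost_preserving _ (fun _ _ _ _ => by fun_prop)
      (fun γ₁ β => (controlSharing_eq_static γ₁ β).symm) _ (fun _ _ _ _ => by fun_prop)
      (fun γ₁ δ₂ => (static_eq_controlSharing γ₁ δ₂).symm) _
  · rw [static_eq_dynamic]
    exact forall_le_iff_of_cost_preserving _ (fun _ _ _ _ => by fun_prop)
      (fun γ₁ δ₂ => (static_eq_dynamic γ₁ δ₂).symm) _ (fun _ _ _ _ => by fun_prop)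
      (fun γ₁ γ₂ => (dynamic_eq_static γ₁ γ₂).symm) _

/-- **Corollary 5.1(i) (two decision makers): global optimality is equivalent across the
control-sharing, static, and dynamic formulations.** Given a control-sharing static
policy `(γ₁s, δ₂cs)`, set `δ₂s (y, s) := δ₂cs (y, γ₁s y, s)` and
`γ₂s (y, t) := δ₂s (y, ginv (t, γ₁s y))`. Then `(γ₁s, δ₂cs)` is globally optimal for
`JCS` iff `(γ₁s, δ₂s)` is globally optimal for `JS` iff `(γ₁s, γ₂s)` is globally optimal
for `JD`; moreover the three costs coincide. -/
theorem corollary51_global_optimality_equivalences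
    {Ω Ω₀ Y₁ Yh Yh' U₁ U₂ : Type*}
    [MeasurableSpace Ω] [MeasurableSpace Ω₀] [MeasurableSpace Y₁]
    [MeasurableSpace Yh] [MeasurableSpace Yh'] [MeasurableSpace U₁] [MeasurableSpace U₂]
    (P : Measure Ω) [IsProbabilityMeasure P]
    (ω₀ : Ω → Ω₀) (y₁ : Ω → Y₁) (yhat₂ : Ω → Yh)
    (hω₀ : Measurable ω₀) (hy₁ : Measurable y₁) (hyhat₂ : Measurable yhat₂)
    (g : Yh × U₁ → Yh') (ginv : Yh' × U₁ → Yh)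
    (hg : Measurable g) (hginv : Measurable ginv)
    (hgl : ∀ (s : Yh) (u : U₁), ginv (g (s, u), u) = s)
    (hgr : ∀ (t : Yh') (u : U₁), g (ginv (t, u), u) = t)
    (c : Ω₀ × U₁ × U₂ → ℝ≥0∞) (hc : Measurable c)
    (JD : (Y₁ → U₁) → (Y₁ × Yh' → U₂) → ℝ≥0∞)
    (JS : (Y₁ → U₁) → (Y₁ × Yh → U₂) → ℝ≥0∞)
    (JCS : (Y₁ → U₁) → (Y₁ × U₁ × Yh → U₂) → ℝ≥0∞)
    (hJD : ∀ γ₁ γ₂, JD γ₁ γ₂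
      = ∫⁻ ω, c (ω₀ ω, γ₁ (y₁ ω), γ₂ (y₁ ω, g (yhat₂ ω, γ₁ (y₁ ω)))) ∂P)
    (hJS : ∀ γ₁ δ₂, JS γ₁ δ₂
      = ∫⁻ ω, c (ω₀ ω, γ₁ (y₁ ω), δ₂ (y₁ ω, yhat₂ ω)) ∂P)
    (hJCS : ∀ γ₁ δ₂cs, JCS γ₁ δ₂cs
      = ∫⁻ ω, c (ω₀ ω, γ₁ (y₁ ω), δ₂cs (y₁ ω, γ₁ (y₁ ω), yhat₂ ω)) ∂P)
    (γ₁s : Y₁ → U₁) (δ₂cs : Y₁ × U₁ × Yh → U₂)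
    (hγ₁s : Measurable γ₁s) (hδ₂cs : Measurable δ₂cs) :
    -- (a) ↔ (b)
    ((∀ (γ₁ : Y₁ → U₁) (β : Y₁ × U₁ × Yh → U₂), Measurable γ₁ → Measurable β →
        JCS γ₁s δ₂cs ≤ JCS γ₁ β)
      ↔ (∀ (γ₁ : Y₁ → U₁) (δ₂ : Y₁ × Yh → U₂), Measurable γ₁ → Measurable δ₂ →
          JS γ₁s (fun p => δ₂cs (p.1, γ₁s p.1, p.2)) ≤ JS γ₁ δ₂))
    -- (b) ↔ (c)
    ∧ ((∀ (γ₁ : Y₁ → U₁) (δ₂ : Y₁ × Yh → U₂), Measurable γ₁ → Measurable δ₂ →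
          JS γ₁s (fun p => δ₂cs (p.1, γ₁s p.1, p.2)) ≤ JS γ₁ δ₂)
      ↔ (∀ (γ₁ : Y₁ → U₁) (γ₂ : Y₁ × Yh' → U₂), Measurable γ₁ → Measurable γ₂ →
          JD γ₁s (fun p => δ₂cs (p.1, γ₁s p.1, ginv (p.2, γ₁s p.1))) ≤ JD γ₁ γ₂))
    -- the three expected costs coincide
    ∧ JCS γ₁s δ₂cs = JS γ₁s (fun p => δ₂cs (p.1, γ₁s p.1, p.2))
    ∧ JS γ₁s (fun p => δ₂cs (p.1, γ₁s p.1, p.2))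
        = JD γ₁s (fun p => δ₂cs (p.1, γ₁s p.1, ginv (p.2, γ₁s p.1))) :=
  corollary51_global_optimality_equivalences_general P ω₀ y₁ yhat₂ g ginv hg hginv hgl c JD JS JCS
    hJD hJS hJCS γ₁s δ₂cs
end
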